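/- arXiv:2503.03605 — 3 statements merged into one kernel-verified Lean document; each statement's English description precedes it below -/
import Mathlib

section
/- Under conditions (AR1), (AR2), (AR3), conditions (AR4) and (AR4′) are equivalent for a subset R̃ of Ṽ₊: the reflection group W(R̃) acts properly on V if and only if for every C > 0 the set { α̃ ∈ R̃ : |p₁(α̃)| ≤ C } is finite. -/
open scoped RealInnerProductSpace

section Aux
variable {V : Type*} [NormedAddCommGroup V] [InnerProductSpace ℝ V]

lemma aux_span_snd (s : Set (ℝ × V)) (hs : Submodule.span ℝ s = ⊤)
    (d : V) (hd : ∀ a ∈ s, ⟪a.2, d⟫ = 0) : d = 0 := by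
  have key : ∀ p : ℝ × V, p ∈ Submodule.span ℝ s → ⟪p.2, d⟫ = 0 := by
    intro p hp
    induction hp using Submodule.span_induction with
    | mem x h => exact hd x h
    | zero => simp
    | add x y hx hy ihx ihy => rw [Prod.snd_add, inner_add_left, ihx, ihy]; ring
    | smul a x hx ih => rw [Prod.smul_snd, real_inner_smul_left, ih]; ring
  have h0 : ((0 : ℝ), d) ∈ Submodule.span ℝ s := by rw [hs]; trivial
  have := key _ h0
  simpa [inner_self_eq_zero] using this

noncomputable def reflFun (a : ℝ × V) : V → V :=
  fun x => x - (2 * (⟪a.2, x⟫ + a.1) / ‖a.2‖ ^ 2) • a.2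

lemma reflFun_inner (a : ℝ × V) (h : a.2 ≠ 0) (x : V) :
    ⟪a.2, reflFun a x⟫ + a.1 = -(⟪a.2, x⟫ + a.1) := by
  have h2 : ‖a.2‖ ^ 2 ≠ 0 := pow_ne_zero 2 (norm_ne_zero_iff.mpr h)
  simp only [reflFun, inner_sub_right, real_inner_smul_right, real_inner_self_eq_norm_sq]
  field_simp
  ring

lemma reflFun_invol (a : ℝ × V) : Function.Involutive (reflFun a) := by
  intro x
  by_cases h : a.2 = 0
  · simp [reflFun, h]
  · have h2 : ‖a.2‖ ^ 2 ≠ 0 := pow_ne_zero 2 (norm_ne_zero_iff.mpr h)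
    have e := reflFun_inner a h x
    show reflFun a (reflFun a x) = x
    rw [reflFun, reflFun]
    conv_lhs => rw [show ⟪a.2, x - (2 * (⟪a.2, x⟫ + a.1) / ‖a.2‖ ^ 2) • a.2⟫ + a.1
      = -(⟪a.2, x⟫ + a.1) from e]
    rw [show (2 * -(⟪a.2, x⟫ + a.1) / ‖a.2‖ ^ 2) = -(2 * (⟪a.2, x⟫ + a.1) / ‖a.2‖ ^ 2) by ring]
    rw [neg_smul, sub_neg_eq_add, sub_add_cancel]

noncomputable def reflPerm (a : ℝ × V) : Equiv.Perm V := (reflFun_invol a).toPerm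

@[simp] lemma reflPerm_apply (a : ℝ × V) (x : V) :
    reflPerm a x = x - (2 * (⟪a.2, x⟫ + a.1) / ‖a.2‖ ^ 2) • a.2 := rfl

end Aux

section Aux2
variable {V : Type*} [NormedAddCommGroup V] [InnerProductSpace ℝ V]

lemma refl_eq_aux (a b : ℝ × V) (ha2 : a.2 ≠ 0) (hb2 : b.2 ≠ 0)
    (hk : ∃ k : ℤ, 2 * ⟪a.2, b.2⟫ = (k : ℝ) * ‖a.2‖ ^ 2)
    (hk' : ∃ k : ℤ, 2 * ⟪b.2, a.2⟫ = (k : ℝ) * ‖b.2‖ ^ 2)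
    (heq : reflPerm b = reflPerm a) :
    ∃ k : ℤ, k ∈ Finset.Icc (-4 : ℤ) 4 ∧ b = ((k : ℝ)/2) • a := by
  have hna : ‖a.2‖ ^ 2 ≠ 0 := pow_ne_zero 2 (norm_ne_zero_iff.mpr ha2)
  have hnb : ‖b.2‖ ^ 2 ≠ 0 := pow_ne_zero 2 (norm_ne_zero_iff.mpr hb2)
  have h1 : ∀ x : V, (2 * (⟪b.2, x⟫ + b.1) / ‖b.2‖ ^ 2) • b.2
      = (2 * (⟪a.2, x⟫ + a.1) / ‖a.2‖ ^ 2) • a.2 := by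
    intro x
    have := congrFun (congrArg (fun (e : Equiv.Perm V) => (e : V → V)) heq) x
    simp only [reflPerm_apply] at this
    exact sub_right_inj.mp this
  have h0 : (2 * b.1 / ‖b.2‖ ^ 2) • b.2 = (2 * a.1 / ‖a.2‖ ^ 2) • a.2 := by
    have := h1 0
    simpa using this
  have hx : ∀ x : V, (2 * ⟪b.2, x⟫ / ‖b.2‖ ^ 2) • b.2
      = (2 * ⟪a.2, x⟫ / ‖a.2‖ ^ 2) • a.2 := by
    intro x
    calc (2 * ⟪b.2, x⟫ / ‖b.2‖ ^ 2) • b.2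
        = (2 * (⟪b.2, x⟫ + b.1) / ‖b.2‖ ^ 2) • b.2 - (2 * b.1 / ‖b.2‖ ^ 2) • b.2 := by
          rw [← sub_smul]; congr 1; ring
      _ = (2 * (⟪a.2, x⟫ + a.1) / ‖a.2‖ ^ 2) • a.2 - (2 * a.1 / ‖a.2‖ ^ 2) • a.2 := by
          rw [h1 x, h0]
      _ = (2 * ⟪a.2, x⟫ / ‖a.2‖ ^ 2) • a.2 := by rw [← sub_smul]; congr 1; ring
  set μ : ℝ := ⟪a.2, b.2⟫ / ‖a.2‖ ^ 2 with hμdef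
  have hb2eq : b.2 = μ • a.2 := by
    have e := hx b.2
    rw [real_inner_self_eq_norm_sq] at e
    have e2 : (2 : ℝ) • b.2 = (2 * ⟪a.2, b.2⟫ / ‖a.2‖ ^ 2) • a.2 := by
      rw [← e]; congr 1; field_simp
    have := congrArg (fun v => (2⁻¹ : ℝ) • v) e2
    simp only [smul_smul] at this
    rw [show (2⁻¹ : ℝ) * 2 = 1 by norm_num, one_smul] at this
    rw [this]; congr 1; rw [hμdef]; ring
  have hμ : μ ≠ 0 := by
    intro h; exact hb2 (by rw [hb2eq, h, zero_smul])
  obtain ⟨k, hkk⟩ := hk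
  have hμk : μ = (k : ℝ) / 2 := by rw [hμdef]; field_simp; linarith [hkk]
  obtain ⟨k', hkk'⟩ := hk'
  have hinner : ⟪b.2, a.2⟫ = μ * ‖a.2‖ ^ 2 := by
    rw [hb2eq, real_inner_smul_left, real_inner_self_eq_norm_sq]
  have hnbval : ‖b.2‖ ^ 2 = μ ^ 2 * ‖a.2‖ ^ 2 := by
    rw [hb2eq, norm_smul, mul_pow, Real.norm_eq_abs, sq_abs]
  have hkμ : 2 = (k' : ℝ) * μ := by
    rw [hinner, hnbval] at hkk'
    have hcancel : 2 * μ = (k' : ℝ) * μ ^ 2 := by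
      have := mul_right_cancel₀ hna (by linarith [hkk'] : (2 * μ) * ‖a.2‖ ^ 2 = ((k' : ℝ) * μ ^ 2) * ‖a.2‖ ^ 2)
      exact this
    have := mul_right_cancel₀ hμ (by nlinarith [hcancel] : 2 * μ = ((k' : ℝ) * μ) * μ)
    exact this
  have hk'ne : (k' : ℝ) ≠ 0 := by
    intro h; rw [h, zero_mul] at hkμ; norm_num at hkμ
  have hk'1 : (1 : ℝ) ≤ |(k' : ℝ)| := by
    have : k' ≠ 0 := by exact_mod_cast hk'ne
    exact_mod_cast Int.one_le_abs this
  have hμle : |μ| ≤ 2 := by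
    have habs : |(k' : ℝ)| * |μ| = 2 := by
      rw [← abs_mul, ← hkμ]; norm_num
    nlinarith [abs_nonneg μ]
  have hkle : k ∈ Finset.Icc (-4 : ℤ) 4 := by
    have : |(k : ℝ)| ≤ 4 := by
      rw [show (k : ℝ) = 2 * μ by rw [hμk]; ring, abs_mul]
      rw [show |(2:ℝ)| = 2 by norm_num]; linarith
    have : |k| ≤ 4 := by exact_mod_cast this
    rw [Finset.mem_Icc]; exact abs_le.mp this
  have hb1 : b.1 = μ * a.1 := by
    rw [hnbval] at h0
    rw [hb2eq, smul_smul] at h0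
    have hc := smul_left_injective ℝ ha2 h0
    field_simp at hc
    have h2 : (2 * b.1 * μ) * ‖a.2‖ ^ 2 = (2 * a.1 * μ ^ 2) * ‖a.2‖ ^ 2 := by
      rw [hc]; ring
    have h3 := mul_right_cancel₀ hna h2
    have h4 : (2 * b.1) * μ = (2 * a.1 * μ) * μ := by linear_combination h3
    have h5 := mul_right_cancel₀ hμ h4
    linarith
  refine ⟨k, hkle, ?_⟩
  have : b = μ • a := by
    apply Prod.ext
    · simpa using hb1.trans (by ring)
    · simpa using hb2eq
  rw [this, hμk]
end Aux2

theorem stmt16 {V : Type*} [NormedAddCommGroup V] [InnerProductSpace ℝ V]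
    [FiniteDimensional ℝ V]
    (R : Set (ℝ × V))
    (hpos : ∀ a ∈ R, a.2 ≠ 0)
    (hspan : Submodule.span ℝ R = ⊤)
    (hrefl : ∀ a ∈ R, ∀ b ∈ R, b - (2 * ⟪a.2, b.2⟫ / ‖a.2‖ ^ 2) • a ∈ R)
    (hint : ∀ a ∈ R, ∀ b ∈ R, ∃ k : ℤ, 2 * ⟪a.2, b.2⟫ = (k : ℝ) * ‖a.2‖ ^ 2) :
    (∀ K₁ K₂ : Set V, IsCompact K₁ → IsCompact K₂ →
      {w : Equiv.Perm V |
        w ∈ Subgroup.closure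
          {g : Equiv.Perm V | ∃ a ∈ R,
            ∀ x : V, g x = x - (2 * (⟪a.2, x⟫ + a.1) / ‖a.2‖ ^ 2) • a.2} ∧
        ((w '' K₁) ∩ K₂).Nonempty}.Finite)
    ↔ (∀ C : ℝ, 0 < C → {a ∈ R | |a.1| ≤ C}.Finite) := by
  classical
  set S : Set (Equiv.Perm V) := {g : Equiv.Perm V | ∃ a ∈ R,
      ∀ x : V, g x = x - (2 * (⟪a.2, x⟫ + a.1) / ‖a.2‖ ^ 2) • a.2} with hSdef
  obtain ⟨s, hsR, hsspan, hsind⟩ := exists_linearIndependent ℝ R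
  rw [hspan] at hsspan
  have hsfin : s.Finite := hsind.setFinite
  set sF := hsfin.toFinset with hsFdef
  have hsF : ∀ a, a ∈ sF ↔ a ∈ s := fun a => hsfin.mem_toFinset
  -- generators are reflections
  have hSrefl : ∀ g ∈ S, ∃ a ∈ R, g = reflPerm a := by
    rintro g ⟨a, haR, hg⟩
    exact ⟨a, haR, Equiv.ext fun x => by rw [hg x]; rfl⟩
  have hreflS : ∀ a ∈ R, reflPerm a ∈ S := fun a ha => ⟨a, ha, fun x => rfl⟩
  have hinvol : ∀ g ∈ S, g⁻¹ = g := by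
    intro g hg
    obtain ⟨a, _, rfl⟩ := hSrefl g hg
    have h2 : ∀ x, reflPerm a (reflPerm a x) = x := fun x => reflFun_invol a x
    ext x
    calc (reflPerm a)⁻¹ x = (reflPerm a)⁻¹ (reflPerm a (reflPerm a x)) := by rw [h2]
      _ = reflPerm a x := Equiv.symm_apply_apply _ _
  -- key invariance property along the group
  have hP : ∀ w ∈ Subgroup.closure S, ∀ a ∈ R, ∃ b ∈ R, ‖b.2‖ = ‖a.2‖ ∧
      ∀ x : V, ⟪a.2, w x⟫ + a.1 = ⟪b.2, x⟫ + b.1 := by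
    have hPgen : ∀ g ∈ S, ∀ a ∈ R, ∃ b ∈ R, ‖b.2‖ = ‖a.2‖ ∧
        ∀ x : V, ⟪a.2, g x⟫ + a.1 = ⟪b.2, x⟫ + b.1 := by
      rintro g ⟨r, hr, hgr⟩ a ha
      have hr2 := hpos r hr
      have hn : ‖r.2‖ ^ 2 ≠ 0 := pow_ne_zero 2 (norm_ne_zero_iff.mpr hr2)
      refine ⟨a - (2 * ⟪r.2, a.2⟫ / ‖r.2‖ ^ 2) • r, hrefl r hr a ha, ?_, ?_⟩
      · have hsnd : (a - (2 * ⟪r.2, a.2⟫ / ‖r.2‖ ^ 2) • r).2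
            = a.2 - (2 * ⟪r.2, a.2⟫ / ‖r.2‖ ^ 2) • r.2 := rfl
        rw [hsnd]
        have hsq : ‖a.2 - (2 * ⟪r.2, a.2⟫ / ‖r.2‖ ^ 2) • r.2‖ ^ 2 = ‖a.2‖ ^ 2 := by
          rw [norm_sub_sq_real, real_inner_smul_right, norm_smul, mul_pow,
            Real.norm_eq_abs, sq_abs, real_inner_comm a.2 r.2]
          field_simp
          ring
        have := congrArg Real.sqrt hsq
        rwa [Real.sqrt_sq (norm_nonneg _), Real.sqrt_sq (norm_nonneg _)] at this
      · intro x
        rw [hgr x]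
        have hfst : (a - (2 * ⟪r.2, a.2⟫ / ‖r.2‖ ^ 2) • r).1
            = a.1 - (2 * ⟪r.2, a.2⟫ / ‖r.2‖ ^ 2) * r.1 := rfl
        have hsnd : (a - (2 * ⟪r.2, a.2⟫ / ‖r.2‖ ^ 2) • r).2
            = a.2 - (2 * ⟪r.2, a.2⟫ / ‖r.2‖ ^ 2) • r.2 := rfl
        rw [hfst, hsnd, inner_sub_right, inner_sub_left, real_inner_smul_right,
          real_inner_smul_left, real_inner_comm a.2 r.2]
        field_simp
        ring
    intro w hw
    have hSS : S ∪ S⁻¹ = S := by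
      apply Set.union_eq_self_of_subset_right
      intro g hg
      rw [Set.mem_inv] at hg
      have h1 := hinvol _ hg
      rw [inv_inv] at h1
      rw [h1]; exact hg
    have hw' : w ∈ Submonoid.closure S := by
      have : w ∈ (Subgroup.closure S).toSubmonoid := hw
      rwa [Subgroup.closure_toSubmonoid, hSS] at this
    clear hw
    induction hw' using Submonoid.closure_induction with
    | mem g hg => exact hPgen g hg
    | one => exact fun a ha => ⟨a, ha, rfl, fun x => by simp⟩
    | mul w u hw hu ihw ihu =>
      intro a ha
      obtain ⟨b, hb, hnb, hfb⟩ := ihw a ha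
      obtain ⟨c, hc, hnc, hfc⟩ := ihu b hb
      exact ⟨c, hc, hnc.trans hnb, fun v => by
        rw [Equiv.Perm.mul_apply, hfb (u v), hfc v]⟩
  constructor
  · -- properness implies (AR4')
    intro hL C hCpos
    by_contra hinf
    -- s is nonempty
    have hne : sF.Nonempty := by
      by_contra h
      have hs0 : s = ∅ := by
        rw [← Set.not_nonempty_iff_eq_empty]
        rintro ⟨x, hx⟩
        exact h ⟨x, (hsF x).mpr hx⟩
      rw [hs0, Submodule.span_empty] at hsspan
      have : ((1 : ℝ), (0 : V)) ∈ (⊥ : Submodule ℝ (ℝ × V)) := by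
        rw [hsspan]; trivial
      rw [Submodule.mem_bot, Prod.ext_iff] at this
      norm_num at this
    set m := sF.inf' hne (fun a => ‖a.2‖) with hmdef
    have hm : 0 < m :=
      (Finset.lt_inf'_iff hne).mpr
        (fun a ha => norm_pos_iff.mpr (hpos a (hsR ((hsF a).mp ha))))
    -- uniform lower bound on the norms of root directions
    have hlow : ∀ b ∈ R, m / 2 ≤ ‖b.2‖ := by
      intro b hb
      by_contra hlt
      push_neg at hlt
      have horth : ∀ p ∈ s, ⟪p.2, b.2⟫ = 0 := by
        intro p hp
        have hpR := hsR hp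
        obtain ⟨k, hk⟩ := hint p hpR b hb
        have hmp : m ≤ ‖p.2‖ := Finset.inf'_le _ ((hsF p).mpr hp)
        have hppos : 0 < ‖p.2‖ := norm_pos_iff.mpr (hpos p hpR)
        have hcs : |⟪p.2, b.2⟫| ≤ ‖p.2‖ * ‖b.2‖ := abs_real_inner_le_norm _ _
        by_contra hne0
        have hk0 : k ≠ 0 := by
          intro h
          rw [h] at hk
          push_cast at hk
          exact hne0 (by linarith)
        have h1k : (1 : ℝ) ≤ |(k : ℝ)| := by exact_mod_cast Int.one_le_abs hk0
        have habs : |(k : ℝ)| * ‖p.2‖ ^ 2 = |2 * ⟪p.2, b.2⟫| := by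
          rw [hk, abs_mul, abs_of_nonneg (by positivity : (0:ℝ) ≤ ‖p.2‖ ^ 2)]
        have h2 : |2 * ⟪p.2, b.2⟫| ≤ 2 * (‖p.2‖ * ‖b.2‖) := by
          rw [abs_mul]
          rw [show |(2:ℝ)| = 2 by norm_num]
          nlinarith [hcs]
        nlinarith [hmp, hppos, hlt, hm]
      exact hpos b hb (aux_span_snd s hsspan b.2 horth)
    set K := Metric.closedBall (0 : V) (2 * C / m) with hKdef
    have hBfin := hL K K (isCompact_closedBall _ _) (isCompact_closedBall _ _)
    -- each bounded root yields a reflection meeting K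
    have hmem : ∀ a ∈ {a ∈ R | |a.1| ≤ C},
        reflPerm a ∈ Subgroup.closure S ∧ ((reflPerm a '' K) ∩ K).Nonempty := by
      rintro a ⟨haR, haC⟩
      have ha2 := hpos a haR
      have hn : ‖a.2‖ ^ 2 ≠ 0 := pow_ne_zero 2 (norm_ne_zero_iff.mpr ha2)
      have hnpos : 0 < ‖a.2‖ := norm_pos_iff.mpr ha2
      refine ⟨Subgroup.subset_closure (hreflS a haR), ?_⟩
      have hxK : -((a.1 / ‖a.2‖ ^ 2) • a.2) ∈ K := by
        rw [hKdef, Metric.mem_closedBall, dist_zero_right, norm_neg, norm_smul,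
          Real.norm_eq_abs, abs_div, abs_of_nonneg (by positivity : (0:ℝ) ≤ ‖a.2‖ ^ 2)]
        have hb2 := hlow a haR
        rw [div_mul_eq_mul_div, pow_two, ← div_div, mul_div_assoc, div_self hnpos.ne', mul_one]
        calc |a.1| / ‖a.2‖ ≤ C / (m / 2) :=
              div_le_div₀ hCpos.le haC (by linarith) hb2
          _ = 2 * C / m := by field_simp
      have hfix : reflPerm a (-((a.1 / ‖a.2‖ ^ 2) • a.2)) = -((a.1 / ‖a.2‖ ^ 2) • a.2) := by
        rw [reflPerm_apply, inner_neg_right, real_inner_smul_right, real_inner_self_eq_norm_sq]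
        rw [show -(a.1 / ‖a.2‖ ^ 2 * ‖a.2‖ ^ 2) + a.1 = 0 by field_simp; ring]
        simp
      exact ⟨_, ⟨_, hxK, hfix⟩, hxK⟩
    apply hinf
    have hsub : {a ∈ R | |a.1| ≤ C} ⊆
        ⋃ w ∈ {w : Equiv.Perm V | w ∈ Subgroup.closure S ∧ ((w '' K) ∩ K).Nonempty},
          ({a ∈ R | |a.1| ≤ C} ∩ {a | reflPerm a = w}) := by
      intro a ha
      exact Set.mem_biUnion (hmem a ha) ⟨ha, rfl⟩
    refine Set.Finite.subset (Set.Finite.biUnion hBfin ?_) hsub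
    intro w hw
    rcases Set.eq_empty_or_nonempty ({a ∈ R | |a.1| ≤ C} ∩ {a | reflPerm a = w}) with h | hne2
    · rw [h]; exact Set.finite_empty
    · obtain ⟨a₀, ⟨ha₀R, _⟩, ha₀w⟩ := hne2
      apply Set.Finite.subset
        (((Finset.Icc (-4 : ℤ) 4).finite_toSet).image (fun k : ℤ => ((k : ℝ) / 2) • a₀))
      rintro b ⟨⟨hbR, _⟩, hbw⟩
      obtain ⟨k, hk4, hkb⟩ := refl_eq_aux a₀ b (hpos _ ha₀R) (hpos _ hbR)
        (hint a₀ ha₀R b hbR) (hint b hbR a₀ ha₀R)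
        (by rw [Set.mem_setOf_eq] at hbw ha₀w; rw [hbw, ha₀w])
      exact ⟨k, by simpa using hk4, hkb.symm⟩
  · -- (AR4') implies properness
    intro hC K₁ K₂ hK₁ hK₂
    obtain ⟨M₁, hM₁0, hM₁⟩ : ∃ M, 0 ≤ M ∧ ∀ x ∈ K₁, ‖x‖ ≤ M := by
      obtain ⟨r, hr⟩ := hK₁.isBounded.subset_closedBall 0
      refine ⟨max r 0, le_max_right _ _, fun x hx => ?_⟩
      have := hr hx
      rw [Metric.mem_closedBall, dist_zero_right] at this
      exact this.trans (le_max_left _ _)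
    obtain ⟨M₂, hM₂0, hM₂⟩ : ∃ M, 0 ≤ M ∧ ∀ x ∈ K₂, ‖x‖ ≤ M := by
      obtain ⟨r, hr⟩ := hK₂.isBounded.subset_closedBall 0
      refine ⟨max r 0, le_max_right _ _, fun x hx => ?_⟩
      have := hr hx
      rw [Metric.mem_closedBall, dist_zero_right] at this
      exact this.trans (le_max_left _ _)
    set C := 1 + ∑ a ∈ sF, (‖a.2‖ * (M₁ + M₂) + |a.1|) with hCdef
    have hterm : ∀ a ∈ sF, 0 ≤ ‖a.2‖ * (M₁ + M₂) + |a.1| := by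
      intro a _; positivity
    have hCpos : 0 < C := by
      have := Finset.sum_nonneg hterm
      rw [hCdef]; linarith
    have hCbound : ∀ a ∈ sF, ‖a.2‖ * (M₁ + M₂) + |a.1| ≤ C := by
      intro a ha
      have := Finset.single_le_sum hterm ha
      rw [hCdef]; linarith
    have hfinC := hC C hCpos
    set f : Equiv.Perm V → (↥sF → ℝ × V) := fun w a =>
      if h : ∃ b ∈ R, ‖b.2‖ = ‖(a : ℝ × V).2‖ ∧
          ∀ x : V, ⟪(a : ℝ × V).2, w x⟫ + (a : ℝ × V).1 = ⟪b.2, x⟫ + b.1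
        then h.choose else 0 with hfdef
    have hfspec : ∀ w, w ∈ Subgroup.closure S → ∀ a : ↥sF,
        f w a ∈ R ∧ ‖(f w a).2‖ = ‖(a : ℝ × V).2‖ ∧
          ∀ x : V, ⟪(a : ℝ × V).2, w x⟫ + (a : ℝ × V).1 = ⟪(f w a).2, x⟫ + (f w a).1 := by
      intro w hw a
      have haR : (a : ℝ × V) ∈ R := hsR ((hsF _).mp a.2)
      have hex := hP w hw _ haR
      rw [hfdef]
      simp only
      rw [dif_pos hex]
      exact hex.choose_spec
    apply Set.Finite.of_finite_image (f := f)
    · apply Set.Finite.subset (Set.Finite.pi (fun _ : ↥sF => hfinC))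
      rintro g ⟨w, ⟨hwcl, hwne⟩, rfl⟩
      rw [Set.mem_pi]
      intro a _
      obtain ⟨y, ⟨x₀, hx₀K, hwx₀⟩, hyK₂⟩ := hwne
      obtain ⟨hbR, hbn, hbf⟩ := hfspec w hwcl a
      refine ⟨hbR, ?_⟩
      have hwx₂ : w x₀ ∈ K₂ := by rw [hwx₀]; exact hyK₂
      have h1 : ⟪(a : ℝ × V).2, w x₀⟫ + (a : ℝ × V).1 = ⟪(f w a).2, x₀⟫ + (f w a).1 :=
        hbf x₀
      have i1 : |⟪(a : ℝ × V).2, w x₀⟫| ≤ ‖(a : ℝ × V).2‖ * M₂ :=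
        (abs_real_inner_le_norm _ _).trans
          (mul_le_mul_of_nonneg_left (hM₂ _ hwx₂) (norm_nonneg _))
      have i2 : |⟪(f w a).2, x₀⟫| ≤ ‖(a : ℝ × V).2‖ * M₁ := by
        refine (abs_real_inner_le_norm _ _).trans ?_
        rw [hbn]
        exact mul_le_mul_of_nonneg_left (hM₁ _ hx₀K) (norm_nonneg _)
      have i3 : |(f w a).1| ≤ |⟪(a : ℝ × V).2, w x₀⟫| + |(a : ℝ × V).1| + |⟪(f w a).2, x₀⟫| := by
        have hb1 : (f w a).1 = (⟪(a : ℝ × V).2, w x₀⟫ + (a : ℝ × V).1) - ⟪(f w a).2, x₀⟫ := by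
          linarith
        rw [hb1]
        calc |(⟪(a : ℝ × V).2, w x₀⟫ + (a : ℝ × V).1) - ⟪(f w a).2, x₀⟫|
            ≤ |⟪(a : ℝ × V).2, w x₀⟫ + (a : ℝ × V).1| + |⟪(f w a).2, x₀⟫| := abs_sub _ _
          _ ≤ (|⟪(a : ℝ × V).2, w x₀⟫| + |(a : ℝ × V).1|) + |⟪(f w a).2, x₀⟫| :=
              add_le_add_left (abs_add_le _ _) _
      have := hCbound (a : ℝ × V) a.2
      show |(f w a).1| ≤ C
      nlinarith [i1, i2, i3]
    · rintro w ⟨hwcl, _⟩ u ⟨hucl, _⟩ hfeq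
      apply Equiv.ext
      intro x
      have hd : ∀ p ∈ s, ⟪p.2, w x - u x⟫ = 0 := by
        intro p hp
        set a : ↥sF := ⟨p, (hsF p).mpr hp⟩ with hadef
        obtain ⟨_, _, hbfw⟩ := hfspec w hwcl a
        obtain ⟨_, _, hbfu⟩ := hfspec u hucl a
        have hfa : f w a = f u a := congrFun hfeq a
        have h1 := hbfw x
        have h2 := hbfu x
        rw [hfa] at h1
        rw [inner_sub_right]
        have hcoe : (a : ℝ × V) = p := rfl
        rw [hcoe] at h1 h2
        linarith
      have := aux_span_snd s hsspan (w x - u x) hd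
      exact sub_eq_zero.mp this
end

section
/- Let Ṽ = ℝ ⊕ V, let m : Ṽ → ℕ be supported (with S(m) possibly infinite but satisfying the growth condition below) and suppose the support Λ(m) of F(m) = Π_{s̃∈S(m)}(1 − e^{s̃})^{m(s̃)} lies on a paraboloid: there exist c̃ ∈ Ṽ and r > 0 with p₁(λ̃ − c̃) = r‖p₂(λ̃ − c̃)‖² for all λ̃ ∈ Λ(m). Then for every α̃ ∈ S(m) with ‖p₂(α̃)‖ > 0: ℝα̃ ∩ S(m)_re = {α̃} and m(α̃) = 1, where S(m)_re = { s̃ ∈ S(m) : ‖p₂(s̃)‖ > 0 }. -/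
open scoped RealInnerProductSpace

/-- The coefficient of `e^l` in the formal expansion of
`F(m) = ∏_{s̃ ∈ S(m)} (1 - e^{s̃})^{m(s̃)}`, obtained from the binomial expansion of each
factor: the coefficient is `∑_ν ∏_v (-1)^{ν v} C(m v, ν v)`, the (finite, under the
assumptions (A)) sum running over finitely supported `ν : Ṽ →₀ ℕ` with `∑_v ν v • v = l`. -/
noncomputable def coeffF {V : Type*} [NormedAddCommGroup V] [InnerProductSpace ℝ V]
    (m : ℝ × V → ℕ) (l : ℝ × V) : ℤ :=
  ∑ᶠ ν ∈ {ν : (ℝ × V) →₀ ℕ | (ν.sum fun v k => k • v) = l},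
    ∏ v ∈ ν.support, ((-1 : ℤ) ^ ν v * (Nat.choose (m v) (ν v) : ℤ))

section aux

set_option linter.unusedSectionVars false

lemma dense_ne_inner {E : Type*} [NormedAddCommGroup E] [InnerProductSpace ℝ E]
    (v : E) (c : ℝ) (h : v ≠ 0 ∨ c ≠ 0) : Dense {u : E | ⟪v, u⟫ ≠ c} := by
  rcases eq_or_ne v 0 with rfl | hv
  · have hc : c ≠ 0 := h.resolve_left (by simp)
    have : {u : E | ⟪(0:E), u⟫ ≠ c} = Set.univ := by
      ext u; simp [inner_zero_left]; exact fun h' => (hc h'.symm)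
    rw [this]; exact dense_univ
  · intro x
    by_cases hx : ⟪v, x⟫ ≠ c
    · exact subset_closure hx
    · push_neg at hx
      have hvv : (0:ℝ) < ⟪v, v⟫ := by
        rw [real_inner_self_eq_norm_sq]
        have : ‖v‖ ≠ 0 := norm_ne_zero_iff.2 hv
        positivity
      have : Filter.Tendsto (fun n : ℕ => x + (1/((n:ℝ)+1)) • v) Filter.atTop (nhds x) := by
        have h1 := tendsto_one_div_add_atTop_nhds_zero_nat (𝕜 := ℝ)
        have h2 : Filter.Tendsto (fun n : ℕ => (1/((n:ℝ)+1)) • v) Filter.atTop (nhds ((0:ℝ) • v)) :=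
          h1.smul_const v
        rw [zero_smul] at h2
        simpa using h2.const_add x
      refine mem_closure_of_tendsto this (Filter.Eventually.of_forall fun n => ?_)
      have hn : (0:ℝ) < 1/((n:ℝ)+1) := by positivity
      simp only [Set.mem_setOf_eq, inner_add_right, real_inner_smul_right, hx]
      intro hcon
      have : (1/((n:ℝ)+1)) * ⟪v, v⟫ = 0 := by linarith
      nlinarith

lemma exists_generic {V : Type*} [NormedAddCommGroup V] [InnerProductSpace ℝ V]
    [FiniteDimensional ℝ V] (Φ : Set (ℝ × V)) (hΦ : Φ.Countable)
    (a : ℝ × V) (ha2 : a.2 ≠ 0) :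
    ∃ w : V, a.1 + ⟪a.2, w⟫ = 0 ∧
      ∀ s ∈ Φ, s.1 + ⟪s.2, w⟫ = 0 → ∃ t : ℝ, s = t • a := by
  set U : Submodule ℝ V := (ℝ ∙ a.2)ᗮ with hU
  set w₀ : V := -(a.1/‖a.2‖^2) • a.2 with hw₀
  have hw₀a : ⟪a.2, w₀⟫ = -a.1 := by
    have hn : ‖a.2‖ ≠ 0 := norm_ne_zero_iff.2 ha2
    rw [hw₀, real_inner_smul_right, real_inner_self_eq_norm_sq]
    field_simp
  set Φ' : Set (ℝ × V) := {s ∈ Φ | ¬ ∃ t : ℝ, s = t • a} with hΦ'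
  have hΦ'c : Φ'.Countable := hΦ.mono (Set.sep_subset _ _)
  have hcount : Countable ↥Φ' := hΦ'c.to_subtype
  set G : ↥Φ' → Set ↥U := fun s => {u : ↥U | ⟪(s:ℝ×V).2, (u:V)⟫ ≠ -((s:ℝ×V).1 + ⟪(s:ℝ×V).2, w₀⟫)}
    with hG
  have hopen : ∀ s, IsOpen (G s) := by
    intro s
    have hc : Continuous fun u : ↥U => ⟪(s:ℝ×V).2, (u:V)⟫ :=
      Continuous.inner continuous_const continuous_subtype_val
    exact isOpen_ne.preimage hc
  have hdense : ∀ s, Dense (G s) := by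
    intro s
    set v' : ↥U := U.orthogonalProjectionOnto (s:ℝ×V).2 with hv'
    have hin : ∀ u : ↥U, ⟪(s:ℝ×V).2, (u:V)⟫ = ⟪v', u⟫ := by
      intro u
      have hperp : (s:ℝ×V).2 - ((U.orthogonalProjectionOnto (s:ℝ×V).2 : ↥U) : V) ∈ Uᗮ :=
        Submodule.sub_starProjection_mem_orthogonal (K := U) (s:ℝ×V).2
      have : ⟪(s:ℝ×V).2 - (v':V), (u:V)⟫ = 0 := by
        rw [real_inner_comm]; exact hperp _ u.2
      have hsplit : ⟪(s:ℝ×V).2, (u:V)⟫ = ⟪(v':V), (u:V)⟫ + ⟪(s:ℝ×V).2 - (v':V), (u:V)⟫ := by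
        rw [inner_sub_left]; ring
      rw [hsplit, this, add_zero]; rfl
    have hkey : v' ≠ 0 ∨ -((s:ℝ×V).1 + ⟪(s:ℝ×V).2, w₀⟫) ≠ 0 := by
      by_contra hcon
      push_neg at hcon
      obtain ⟨hv0, hc0⟩ := hcon
      -- then s.2 ∈ (Uᗮ) = span a.2
      have hs2 : (s:ℝ×V).2 ∈ ℝ ∙ a.2 := by
        have : (s:ℝ×V).2 ∈ Uᗮ := by
          have : (s:ℝ×V).2 - ((U.orthogonalProjectionOnto (s:ℝ×V).2 : ↥U) : V) ∈ Uᗮ :=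
            Submodule.sub_starProjection_mem_orthogonal (K := U) (s:ℝ×V).2
          rw [hv'] at hv0
          rw [hv0] at this
          simpa using this
        rwa [hU, Submodule.orthogonal_orthogonal] at this
      obtain ⟨t, ht⟩ := Submodule.mem_span_singleton.1 hs2
      have hst : (s:ℝ×V).2 = t • a.2 := ht.symm
      have h1 : ⟪(s:ℝ×V).2, w₀⟫ = -(t * a.1) := by
        rw [hst, real_inner_smul_left, hw₀a]; ring
      have hs1 : (s:ℝ×V).1 = t * a.1 := by
        have := hc0
        rw [h1] at this
        linarith [neg_eq_zero.1 this]
      exact s.2.2 ⟨t, Prod.ext (by simpa using hs1) (by simpa using hst)⟩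
    have := dense_ne_inner v' (-((s:ℝ×V).1 + ⟪(s:ℝ×V).2, w₀⟫)) hkey
    have hGs : G s = {u : ↥U | ⟪v', u⟫ ≠ -((s:ℝ×V).1 + ⟪(s:ℝ×V).2, w₀⟫)} := by
      ext u; simp only [hG, Set.mem_setOf_eq, hin u]
    rw [hGs]; exact this
  have hd : Dense (⋂ s, G s) := dense_iInter_of_isOpen hopen hdense
  obtain ⟨u, hu⟩ := hd.nonempty
  refine ⟨w₀ + u, ?_, ?_⟩
  · have hua : ⟪a.2, (u:V)⟫ = 0 := by
      have h2 : (u:V) ∈ (ℝ ∙ a.2)ᗮ := u.2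
      exact h2 a.2 (Submodule.mem_span_singleton_self a.2)
    rw [inner_add_right, hw₀a, hua]; ring
  · intro s hs hs0
    by_contra hnot
    push_neg at hnot
    have hsΦ' : s ∈ Φ' := ⟨hs, by push_neg; exact fun t => hnot t⟩
    have hGu : u ∈ G ⟨s, hsΦ'⟩ := Set.mem_iInter.1 hu ⟨s, hsΦ'⟩
    simp only [hG, Set.mem_setOf_eq] at hGu
    apply hGu
    rw [inner_add_right] at hs0
    linarith

section extremal
variable {ι : Type*} [DecidableEq ι]

lemma extremal_min (L : Finset ι) (τ : ι → ℝ) (mval ν : ι → ℕ)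
    (hτ : ∀ v ∈ L, τ v ≠ 0) (hle : ∀ v ∈ L, ν v ≤ mval v)
    (heq : ∑ v ∈ L, (ν v : ℝ) * τ v = ∑ v ∈ L, if τ v < 0 then (mval v : ℝ) * τ v else 0) :
    ∀ v ∈ L, ν v = if τ v < 0 then mval v else 0 := by
  have hzero : ∑ v ∈ L, ((ν v : ℝ) * τ v - if τ v < 0 then (mval v : ℝ) * τ v else 0) = 0 := by
    rw [Finset.sum_sub_distrib, heq, sub_self]
  have hnn : ∀ v ∈ L, 0 ≤ (ν v : ℝ) * τ v - if τ v < 0 then (mval v : ℝ) * τ v else 0 := by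
    intro v hv
    by_cases h : τ v < 0
    · simp only [h, if_true]
      have : (ν v : ℝ) ≤ mval v := Nat.cast_le.2 (hle v hv)
      nlinarith
    · simp only [h, if_false, sub_zero]
      have h' : 0 ≤ τ v := not_lt.1 h
      positivity
  have hall := (Finset.sum_eq_zero_iff_of_nonneg hnn).1 hzero
  intro v hv
  have h := hall v hv
  by_cases hτv : τ v < 0
  · simp only [hτv, if_true] at h ⊢
    have : ((ν v : ℝ) - mval v) * τ v = 0 := by linarith
    rcases mul_eq_zero.1 this with h' | h'
    · exact_mod_cast sub_eq_zero.1 h'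
    · exact absurd h' (hτ v hv)
  · simp only [hτv, if_false, sub_zero] at h ⊢
    rcases mul_eq_zero.1 h with h' | h'
    · exact_mod_cast h'
    · exact absurd h' (hτ v hv)

lemma extremal_mid (L : Finset ι) (τ : ι → ℝ) (mval ν : ι → ℕ) (u : ℝ) (hu : 0 < u)
    (hτu : ∀ v ∈ L, u ≤ |τ v|) (hle : ∀ v ∈ L, ν v ≤ mval v)
    (heq : ∑ v ∈ L, (ν v : ℝ) * τ v
      = (∑ v ∈ L, if τ v < 0 then (mval v : ℝ) * τ v else 0) + u) :
    ∃ w ∈ L, |τ w| = u ∧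
      (∀ v ∈ L, ν v = if v = w then (if τ v < 0 then mval v - 1 else 1)
        else if τ v < 0 then mval v else 0) := by
  classical
  set d : ι → ℕ := fun v => if τ v < 0 then mval v - ν v else ν v with hd
  have hterm : ∀ v ∈ L, (ν v : ℝ) * τ v - (if τ v < 0 then (mval v : ℝ) * τ v else 0)
      = (d v : ℝ) * |τ v| := by
    intro v hv
    by_cases h : τ v < 0
    · simp only [hd, h, if_true]
      rw [abs_of_neg h, Nat.cast_sub (hle v hv)]
      ring
    · simp only [hd, h, if_false, sub_zero]
      rw [abs_of_nonneg (not_lt.1 h)]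
  have hsum : ∑ v ∈ L, (d v : ℝ) * |τ v| = u := by
    rw [← Finset.sum_congr rfl hterm, Finset.sum_sub_distrib]
    rw [heq]; ring
  -- find w with d w ≠ 0
  have hex : ∃ w ∈ L, d w ≠ 0 := by
    by_contra hcon
    push_neg at hcon
    have : ∑ v ∈ L, (d v : ℝ) * |τ v| = 0 :=
      Finset.sum_eq_zero fun v hv => by rw [hcon v hv]; simp
    rw [this] at hsum; linarith
  obtain ⟨w, hwL, hdw⟩ := hex
  have hnn : ∀ v ∈ L, 0 ≤ (d v : ℝ) * |τ v| := fun v hv => by positivity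
  have hrest : ∑ v ∈ L.erase w, (d v : ℝ) * |τ v| = u - (d w : ℝ) * |τ w| := by
    rw [← Finset.add_sum_erase L (fun v => (d v : ℝ) * |τ v|) hwL] at hsum
    linarith
  have hdw1 : (1 : ℝ) ≤ d w := by exact_mod_cast Nat.one_le_iff_ne_zero.2 hdw
  have hτw : u ≤ |τ w| := hτu w hwL
  have hrest_nn : 0 ≤ ∑ v ∈ L.erase w, (d v : ℝ) * |τ v| :=
    Finset.sum_nonneg fun v hv => hnn v (Finset.mem_of_mem_erase hv)
  -- d w * |τ w| ≤ u and ≥ u forces equalities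
  have hub : (d w : ℝ) * |τ w| ≤ u := by linarith
  have hlb : u ≤ (d w : ℝ) * |τ w| := by nlinarith
  have heqw : (d w : ℝ) * |τ w| = u := le_antisymm hub hlb
  have hdw_eq : d w = 1 := by
    by_contra hne
    have : (2 : ℝ) ≤ d w := by
      have : 2 ≤ d w := by omega
      exact_mod_cast this
    nlinarith
  have hτw_eq : |τ w| = u := by
    rw [hdw_eq] at heqw; simpa using heqw
  have hrest0 : ∀ v ∈ L.erase w, d v = 0 := by
    have h0 : ∑ v ∈ L.erase w, (d v : ℝ) * |τ v| = 0 := by rw [hrest, heqw]; ring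
    intro v hv
    have := (Finset.sum_eq_zero_iff_of_nonneg
      (fun v hv => hnn v (Finset.mem_of_mem_erase hv))).1 h0 v hv
    have hτv : |τ v| ≠ 0 := by
      have := hτu v (Finset.mem_of_mem_erase hv); linarith
    rcases mul_eq_zero.1 this with h' | h'
    · exact_mod_cast h'
    · exact absurd h' hτv
  refine ⟨w, hwL, hτw_eq, fun v hv => ?_⟩
  by_cases hvw : v = w
  · subst hvw
    simp only [if_pos rfl]
    by_cases h : τ v < 0
    · simp only [hd, h, if_true] at hdw_eq
      simp only [h, if_true]
      omega
    · simp only [hd, h, if_false] at hdw_eq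
      simp only [h, if_false]
      exact hdw_eq
  · have hv' : v ∈ L.erase w := Finset.mem_erase.2 ⟨hvw, hv⟩
    have := hrest0 v hv'
    simp only [if_neg hvw]
    by_cases h : τ v < 0
    · simp only [hd, h, if_true] at this
      simp only [h, if_true]
      have := hle v hv
      omega
    · simp only [hd, h, if_false] at this
      simp only [h, if_false]
      exact this

end extremal

lemma quad_three_roots (A B C t₁ t₂ t₃ : ℝ) (hA : A ≠ 0)
    (h12 : t₁ ≠ t₂) (h13 : t₁ ≠ t₃) (h23 : t₂ ≠ t₃)
    (e1 : A*t₁^2 + B*t₁ + C = 0) (e2 : A*t₂^2 + B*t₂ + C = 0)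
    (e3 : A*t₃^2 + B*t₃ + C = 0) : False := by
  have k12 : A*(t₁+t₂) + B = 0 := by
    have h : (A*(t₁+t₂) + B) * (t₁ - t₂) = 0 := by linear_combination e1 - e2
    rcases mul_eq_zero.1 h with h' | h'
    · exact h'
    · exact absurd (sub_eq_zero.1 h') h12
  have k13 : A*(t₁+t₃) + B = 0 := by
    have h : (A*(t₁+t₃) + B) * (t₁ - t₃) = 0 := by linear_combination e1 - e3
    rcases mul_eq_zero.1 h with h' | h'
    · exact h'
    · exact absurd (sub_eq_zero.1 h') h13
  have : A * (t₂ - t₃) = 0 := by linear_combination k12 - k13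
  rcases mul_eq_zero.1 this with h' | h'
  · exact hA h'
  · exact h23 (sub_eq_zero.1 h')

noncomputable def psiL {V : Type*} [NormedAddCommGroup V] [InnerProductSpace ℝ V]
    (w : V) : (ℝ × V) →ₗ[ℝ] ℝ where
  toFun s := s.1 + ⟪s.2, w⟫
  map_add' x y := by simp [inner_add_left]; ring
  map_smul' t x := by simp [real_inner_smul_left]; ring

noncomputable def tauL {V : Type*} [NormedAddCommGroup V] [InnerProductSpace ℝ V]
    (a : ℝ × V) : (ℝ × V) →ₗ[ℝ] ℝ where
  toFun s := ⟪s.2, a.2⟫ / ‖a.2‖^2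
  map_add' x y := by simp [inner_add_left]; ring
  map_smul' t x := by simp [real_inner_smul_left]; ring

noncomputable def trm {V : Type*} [NormedAddCommGroup V] [InnerProductSpace ℝ V]
    (m : ℝ × V → ℕ) (ν : (ℝ × V) →₀ ℕ) : ℤ :=
  ∏ v ∈ ν.support, ((-1 : ℤ) ^ ν v * (Nat.choose (m v) (ν v) : ℤ))

variable {V : Type*} [NormedAddCommGroup V] [InnerProductSpace ℝ V]

lemma psiL_apply (w : V) (s : ℝ × V) : psiL w s = s.1 + ⟪s.2, w⟫ := rfl

lemma tauL_apply (a : ℝ × V) (s : ℝ × V) : tauL a s = ⟪s.2, a.2⟫ / ‖a.2‖^2 := rfl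

lemma tauL_smul (a : ℝ × V) (ha2 : a.2 ≠ 0) (t : ℝ) : tauL a (t • a) = t := by
  have hn : ‖a.2‖ ≠ 0 := norm_ne_zero_iff.2 ha2
  simp only [tauL, LinearMap.coe_mk, AddHom.coe_mk, Prod.smul_snd, real_inner_smul_left,
    real_inner_self_eq_norm_sq]
  field_simp

lemma support_countable (m : ℝ × V → ℕ)
    (hhalf : ∀ n : ℝ × V, 0 < n.1 → ∀ C : ℝ,
      {s ∈ Function.support m | s.1 * n.1 + ⟪s.2, n.2⟫ ≤ C}.Finite) :
    (Function.support m).Countable := by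
  have h : Function.support m = ⋃ k : ℕ, {s ∈ Function.support m | s.1 * 1 + ⟪s.2, (0:V)⟫ ≤ k} := by
    ext s
    simp only [Set.mem_iUnion, Set.mem_setOf_eq, inner_zero_right, mul_one, add_zero]
    constructor
    · intro hs
      rcases le_or_gt s.1 0 with h1 | h1
      · exact ⟨0, hs, by simpa using h1⟩
      · exact ⟨⌈s.1⌉₊, hs, Nat.le_ceil s.1⟩
    · rintro ⟨k, hk, -⟩; exact hk
  rw [h]
  exact Set.countable_iUnion fun k => ((hhalf (1,0) one_pos k).countable)

lemma trm_le (m : ℝ × V → ℕ) (ν : (ℝ × V) →₀ ℕ) (h : trm m ν ≠ 0) :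
    ∀ v, ν v ≤ m v := by
  intro v
  by_contra hv
  push_neg at hv
  have hsupp : v ∈ ν.support := Finsupp.mem_support_iff.2 (by omega)
  apply h
  apply Finset.prod_eq_zero hsupp
  rw [Nat.choose_eq_zero_of_lt hv]
  simp

lemma trm_eq_prod (m : ℝ × V → ℕ) (ν : (ℝ × V) →₀ ℕ) (K : Finset (ℝ × V))
    (hK : ν.support ⊆ K) :
    trm m ν = ∏ v ∈ K, ((-1 : ℤ) ^ ν v * (Nat.choose (m v) (ν v) : ℤ)) := by
  apply Finset.prod_subset hK
  intro v hv hvn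
  have : ν v = 0 := Finsupp.notMem_support_iff.1 hvn
  simp [this]

lemma sum_eq_finset (ν : (ℝ × V) →₀ ℕ) (K : Finset (ℝ × V)) (hK : ν.support ⊆ K) :
    (ν.sum fun v k => k • v) = ∑ v ∈ K, ν v • v :=
  Finsupp.sum_of_support_subset ν hK _ (fun i _ => by simp)

lemma psi_sum (w : V) (ν : (ℝ × V) →₀ ℕ) (K : Finset (ℝ × V)) (hK : ν.support ⊆ K) :
    psiL w (ν.sum fun v k => k • v) = ∑ v ∈ K, (ν v : ℝ) * psiL w v := by
  rw [Finsupp.sum_of_support_subset ν hK _ (fun i _ => by simp), map_sum]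
  congr 1; ext v; rw [map_nsmul]; simp [nsmul_eq_mul]

lemma classify (m : ℝ × V → ℕ) (w : V) (a : ℝ × V) (ha2 : a.2 ≠ 0)
    (hψa : psiL w a = 0)
    (Neg Lin : Finset (ℝ × V))
    (hNeg : ∀ s, s ∈ Neg ↔ (m s ≠ 0 ∧ psiL w s < 0))
    (hLin : ∀ s, s ∈ Lin ↔ (m s ≠ 0 ∧ psiL w s = 0))
    (ν : (ℝ × V) →₀ ℕ) (hν : trm m ν ≠ 0) (t : ℝ)
    (hsum : (ν.sum fun v k => k • v) = (∑ v ∈ Neg, m v • v) + t • a) :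
    (∀ v ∈ Neg, ν v = m v) ∧ (↑ν.support ⊆ (↑Neg ∪ ↑Lin : Set (ℝ × V))) ∧
      (∑ v ∈ Lin, (ν v : ℝ) * tauL a v) = t := by
  classical
  have hle : ∀ v, ν v ≤ m v := trm_le m ν hν
  have hsuppm : ∀ v ∈ ν.support, m v ≠ 0 := by
    intro v hv
    have h1 : ν v ≠ 0 := Finsupp.mem_support_iff.1 hv
    have := hle v; omega
  set K : Finset (ℝ × V) := ν.support ∪ Neg with hK
  have hsK : ν.support ⊆ K := Finset.subset_union_left
  have hNK : Neg ⊆ K := Finset.subset_union_right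
  -- ψ equation
  have hψeq : ∑ v ∈ K, (ν v : ℝ) * psiL w v = ∑ v ∈ Neg, (m v : ℝ) * psiL w v := by
    rw [← psi_sum w ν K hsK, hsum, map_add, map_smul, hψa, smul_zero, add_zero, map_sum]
    congr 1
    ext v
    rw [map_nsmul]
    simp [nsmul_eq_mul]
  have hψeq2 : ∑ v ∈ K, ((ν v : ℝ) * psiL w v - if v ∈ Neg then (m v : ℝ) * psiL w v else 0)
      = 0 := by
    rw [Finset.sum_sub_distrib, hψeq, Finset.sum_ite_mem, Finset.inter_eq_right.2 hNK, sub_self]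
  have hnn : ∀ v ∈ K, 0 ≤ (ν v : ℝ) * psiL w v - if v ∈ Neg then (m v : ℝ) * psiL w v else 0 := by
    intro v hv
    by_cases h : v ∈ Neg
    · simp only [h, if_true]
      have h1 : psiL w v < 0 := ((hNeg v).1 h).2
      have h2 : (ν v : ℝ) ≤ m v := Nat.cast_le.2 (hle v)
      nlinarith
    · simp only [h, if_false, sub_zero]
      rcases Finset.mem_union.1 hv with hv' | hv'
      · have hm : m v ≠ 0 := hsuppm v hv'
        have hψv : 0 ≤ psiL w v := by
          by_contra hcon
          push_neg at hcon
          exact h ((hNeg v).2 ⟨hm, hcon⟩)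
        positivity
      · exact absurd hv' h
  have hall := (Finset.sum_eq_zero_iff_of_nonneg hnn).1 hψeq2
  have hνNeg : ∀ v ∈ Neg, ν v = m v := by
    intro v hv
    have h := hall v (hNK hv)
    simp only [hv, if_true] at h
    have h1 : psiL w v < 0 := ((hNeg v).1 hv).2
    have : ((ν v : ℝ) - m v) * psiL w v = 0 := by linarith
    rcases mul_eq_zero.1 this with h' | h'
    · exact_mod_cast sub_eq_zero.1 h'
    · exact absurd h' (ne_of_lt h1)
  have hsupp_sub : ↑ν.support ⊆ (↑Neg ∪ ↑Lin : Set (ℝ × V)) := by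
    intro v hv
    rw [Set.mem_union, Finset.mem_coe, Finset.mem_coe]
    by_cases h : v ∈ Neg
    · exact Or.inl h
    · have hv' : v ∈ ν.support := hv
      have h2 := hall v (hsK hv')
      simp only [h, if_false, sub_zero] at h2
      have hνv : ν v ≠ 0 := Finsupp.mem_support_iff.1 hv'
      have hψ0 : psiL w v = 0 := by
        rcases mul_eq_zero.1 h2 with h' | h'
        · exact absurd (by exact_mod_cast h' : ν v = 0) hνv
        · exact h'
      exact Or.inr ((hLin v).2 ⟨hsuppm v hv', hψ0⟩)
  refine ⟨hνNeg, hsupp_sub, ?_⟩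
  -- now compute the sum over Neg ∪ Lin
  have hdisj : Disjoint Neg Lin := by
    rw [Finset.disjoint_left]
    intro v h1 h2
    have := ((hNeg v).1 h1).2
    have := ((hLin v).1 h2).2
    linarith
  have hsupp_sub' : ν.support ⊆ Neg ∪ Lin := by
    intro v hv
    rcases hsupp_sub hv with h | h
    · exact Finset.mem_union.2 (Or.inl h)
    · exact Finset.mem_union.2 (Or.inr h)
  have hsum2 : (ν.sum fun v k => k • v) = ∑ v ∈ Neg, ν v • v + ∑ v ∈ Lin, ν v • v := by
    rw [sum_eq_finset ν (Neg ∪ Lin) hsupp_sub', Finset.sum_union hdisj]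
  have hNeg_eq : ∑ v ∈ Neg, ν v • v = ∑ v ∈ Neg, m v • v :=
    Finset.sum_congr rfl fun v hv => by rw [hνNeg v hv]
  have hLin_eq : ∑ v ∈ Lin, ν v • v = t • a := by
    have := hsum
    rw [hsum2, hNeg_eq] at this
    exact add_left_cancel this
  have htau : tauL a (∑ v ∈ Lin, ν v • v) = ∑ v ∈ Lin, (ν v : ℝ) * tauL a v := by
    rw [map_sum]
    congr 1
    ext v
    rw [map_nsmul]
    simp [nsmul_eq_mul]
  rw [← htau, hLin_eq, tauL_smul a ha2]

lemma coeff_eq (m : ℝ × V → ℕ) (l : ℝ × V) (T : Finset ((ℝ × V) →₀ ℕ))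
    (hfwd : ∀ ν ∈ T, (ν.sum fun v k => k • v) = l)
    (hbwd : ∀ ν : (ℝ × V) →₀ ℕ, trm m ν ≠ 0 → (ν.sum fun v k => k • v) = l → ν ∈ T) :
    coeffF m l = ∑ ν ∈ T, trm m ν := by
  have h0 : coeffF m l
      = ∑ᶠ ν ∈ {ν : (ℝ × V) →₀ ℕ | (ν.sum fun v k => k • v) = l}, trm m ν := rfl
  rw [h0]
  apply finsum_mem_eq_sum_of_inter_support_eq
  ext ν
  simp only [Set.mem_inter_iff, Set.mem_setOf_eq, Function.mem_support, Finset.mem_coe]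
  constructor
  · rintro ⟨h1, h2⟩; exact ⟨hbwd ν h2 h1, h2⟩
  · rintro ⟨h1, h2⟩; exact ⟨hfwd ν h1, h2⟩

end aux

set_option maxHeartbeats 2000000 in
theorem stmt18 {V : Type*} [NormedAddCommGroup V] [InnerProductSpace ℝ V]
    [FiniteDimensional ℝ V]
    (m : ℝ × V → ℕ) (h0 : m 0 = 0)
    (hne : (Function.support m).Nonempty)
    (hhalf : ∀ n : ℝ × V, 0 < n.1 → ∀ C : ℝ,
      {s ∈ Function.support m | s.1 * n.1 + ⟪s.2, n.2⟫ ≤ C}.Finite)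
    (hspan : Submodule.span ℝ (Function.support m) = ⊤)
    (hirr : ¬ ∃ S₁ S₂ : Set (ℝ × V),
      {s ∈ Function.support m | s.2 ≠ 0} = S₁ ∪ S₂ ∧ S₁.Nonempty ∧ S₂.Nonempty ∧
      Disjoint S₁ S₂ ∧ ∀ a ∈ S₁, ∀ b ∈ S₂, ⟪a.2, b.2⟫ = 0)
    (hpara : ∃ c : ℝ × V, ∃ r : ℝ, 0 < r ∧
      ∀ l : ℝ × V, coeffF m l ≠ 0 → (l - c).1 = r * ‖(l - c).2‖ ^ 2) :
    ∀ a ∈ Function.support m, a.2 ≠ 0 →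
      ({v | ∃ t : ℝ, v = t • a} ∩ {s ∈ Function.support m | s.2 ≠ 0} = {a}) ∧ m a = 1 := by
  classical
  intro a haΦ ha2
  have ham : m a ≠ 0 := haΦ
  obtain ⟨w, hw1, hw2⟩ := exists_generic _ (support_countable m hhalf) a ha2
  have hψa : psiL w a = 0 := hw1
  have hBfin : {s ∈ Function.support m | psiL w s ≤ 0}.Finite := by
    have h := hhalf (1, w) (by norm_num) 0
    have : {s ∈ Function.support m | psiL w s ≤ 0}
        = {s ∈ Function.support m | s.1 * (1, w).1 + ⟪s.2, (1, w).2⟫ ≤ 0} := by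
      ext s; simp [psiL_apply]
    rw [this]; exact h
  set B : Finset (ℝ × V) := hBfin.toFinset with hBdef
  set Neg : Finset (ℝ × V) := B.filter (fun s => psiL w s < 0) with hNegdef
  set Lin : Finset (ℝ × V) := B.filter (fun s => psiL w s = 0) with hLindef
  have hNeg : ∀ s, s ∈ Neg ↔ (m s ≠ 0 ∧ psiL w s < 0) := by
    intro s
    simp only [hNegdef, Finset.mem_filter, hBdef, Set.Finite.mem_toFinset, Set.mem_setOf_eq,
      Function.mem_support]
    constructor
    · rintro ⟨⟨h1, h2⟩, h3⟩; exact ⟨h1, h3⟩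
    · rintro ⟨h1, h2⟩; exact ⟨⟨h1, le_of_lt h2⟩, h2⟩
  have hLin : ∀ s, s ∈ Lin ↔ (m s ≠ 0 ∧ psiL w s = 0) := by
    intro s
    simp only [hLindef, Finset.mem_filter, hBdef, Set.Finite.mem_toFinset, Set.mem_setOf_eq,
      Function.mem_support]
    constructor
    · rintro ⟨⟨h1, h2⟩, h3⟩; exact ⟨h1, h3⟩
    · rintro ⟨h1, h2⟩; exact ⟨⟨h1, le_of_eq h2⟩, h2⟩
  have haLin : a ∈ Lin := (hLin a).2 ⟨ham, hψa⟩
  have hvline : ∀ v ∈ Lin, v = tauL a v • a := by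
    intro v hv
    obtain ⟨hm, hψ⟩ := (hLin v).1 hv
    obtain ⟨t, ht⟩ := hw2 v hm (by rw [← psiL_apply]; exact hψ)
    have h2 : tauL a v = t := by rw [ht, tauL_smul a ha2]
    rw [h2]; exact ht
  have hτne : ∀ v ∈ Lin, tauL a v ≠ 0 := by
    intro v hv h
    have h1 := hvline v hv
    rw [h, zero_smul] at h1
    have hm := ((hLin v).1 hv).1
    rw [h1] at hm
    exact hm h0
  have hdisj : Disjoint Neg Lin := by
    rw [Finset.disjoint_left]
    intro v h1 h2
    have ha1 := ((hNeg v).1 h1).2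
    have ha2' := ((hLin v).1 h2).2
    linarith
  set LinNeg : Finset (ℝ × V) := Lin.filter (fun v => tauL a v < 0) with hLinNegdef
  set σ : ℝ × V := ∑ v ∈ Neg, m v • v with hσdef
  set t₁ : ℝ := ∑ v ∈ Lin, if tauL a v < 0 then (m v : ℝ) * tauL a v else 0 with ht₁def
  set t₃ : ℝ := ∑ v ∈ Lin, if 0 < tauL a v then (m v : ℝ) * tauL a v else 0 with ht₃def
  have himg : (Lin.image fun v => |tauL a v|).Nonempty :=
    ⟨|tauL a a|, Finset.mem_image_of_mem _ haLin⟩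
  set u : ℝ := (Lin.image fun v => |tauL a v|).min' himg with hudef
  have hτu : ∀ v ∈ Lin, u ≤ |tauL a v| := fun v hv =>
    Finset.min'_le _ _ (Finset.mem_image_of_mem _ hv)
  have hu : 0 < u := by
    obtain ⟨v₀, hv₀, hv₀u⟩ := Finset.mem_image.1 ((Lin.image fun v => |tauL a v|).min'_mem himg)
    rw [hudef, ← hv₀u]
    exact abs_pos.2 (hτne v₀ hv₀)
  set Umin : Finset (ℝ × V) := Lin.filter (fun v => |tauL a v| = u) with hUmindef
  have hUne : Umin.Nonempty := by
    obtain ⟨v₀, hv₀, hv₀u⟩ := Finset.mem_image.1 ((Lin.image fun v => |tauL a v|).min'_mem himg)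
    exact ⟨v₀, Finset.mem_filter.2 ⟨hv₀, by rw [hudef]; exact hv₀u⟩⟩
  set M : ℕ := ∑ v ∈ Lin, m v with hMdef
  -- the distinguished Finsupp ν₁
  set ν₁ : (ℝ × V) →₀ ℕ := Finsupp.onFinset (Neg ∪ LinNeg)
    (fun v => if v ∈ Neg ∪ LinNeg then m v else 0)
    (fun v h => by by_contra hc; exact h (if_neg hc)) with hν₁def
  have hν₁app : ∀ v, ν₁ v = if v ∈ Neg ∪ LinNeg then m v else 0 := fun v => rfl
  have hν₁mem : ∀ v, ν₁ v ≠ 0 → v ∈ Neg ∪ LinNeg := by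
    intro v h
    by_contra hc
    rw [hν₁app, if_neg hc] at h
    exact h rfl
  have hν₁supp : ν₁.support ⊆ Neg ∪ Lin := by
    intro v hv
    rcases Finset.mem_union.1 (hν₁mem v (Finsupp.mem_support_iff.1 hv)) with h | h
    · exact Finset.mem_union.2 (Or.inl h)
    · exact Finset.mem_union.2 (Or.inr (Finset.mem_filter.1 h).1)
  have hmNeg : ∀ v ∈ Neg, m v ≠ 0 := fun v hv => ((hNeg v).1 hv).1
  have hmLin : ∀ v ∈ Lin, m v ≠ 0 := fun v hv => ((hLin v).1 hv).1
  have hν₁eqm : ∀ v ∈ Neg ∪ LinNeg, ν₁ v = m v := by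
    intro v hv; rw [hν₁app, if_pos hv]
  have hν₁trm : trm m ν₁ ≠ 0 := by
    rw [trm, Finset.prod_ne_zero_iff]
    intro v hv
    have h1 := Finsupp.mem_support_iff.1 hv
    have h2 : ν₁ v = m v := hν₁eqm v (hν₁mem v h1)
    rw [h2, Nat.choose_self]
    exact mul_ne_zero (pow_ne_zero _ (by norm_num)) (by norm_num)
  have hsmul_line : ∀ v ∈ Lin, ∀ k : ℕ, k • v = ((k : ℝ) * tauL a v) • a := by
    intro v hv k
    conv_lhs => rw [hvline v hv]
    rw [← Nat.cast_smul_eq_nsmul ℝ, smul_smul]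
  have hν₁Lin : ∀ v ∈ Lin, ν₁ v = if tauL a v < 0 then m v else 0 := by
    intro v hv
    by_cases hc : tauL a v < 0
    · rw [if_pos hc]
      exact hν₁eqm v (Finset.mem_union.2 (Or.inr (Finset.mem_filter.2 ⟨hv, hc⟩)))
    · rw [if_neg hc, hν₁app, if_neg]
      intro hm
      rcases Finset.mem_union.1 hm with h | h
      · exact (Finset.disjoint_left.1 hdisj h) hv
      · exact hc (Finset.mem_filter.1 h).2
  have hsumν₁ : (ν₁.sum fun v k => k • v) = σ + t₁ • a := by
    rw [sum_eq_finset ν₁ (Neg ∪ Lin) hν₁supp, Finset.sum_union hdisj]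
    congr 1
    · rw [hσdef]
      exact Finset.sum_congr rfl fun v hv =>
        by rw [hν₁eqm v (Finset.mem_union.2 (Or.inl hv))]
    · have h1 : ∀ v ∈ Lin, ν₁ v • v = (if tauL a v < 0 then (m v : ℝ) * tauL a v else 0) • a := by
        intro v hv
        rw [hν₁Lin v hv]
        by_cases hc : tauL a v < 0
        · rw [if_pos hc, if_pos hc, hsmul_line v hv]
        · rw [if_neg hc, if_neg hc, zero_smul, zero_smul]
      rw [Finset.sum_congr rfl h1, ← Finset.sum_smul]
  -- uniqueness at level t: generic consequence of classify + extremal_min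
  have huniq_min : ∀ ν : (ℝ × V) →₀ ℕ, trm m ν ≠ 0 →
      (ν.sum fun v k => k • v) = σ + t₁ • a → ν = ν₁ := by
    intro ν hν hsum
    obtain ⟨hN, hsub, hτsum⟩ := classify m w a ha2 hψa Neg Lin hNeg hLin ν hν t₁
      (by rw [hsum, hσdef])
    have hLinvals := extremal_min Lin (fun v => tauL a v) m (fun v => ν v) hτne
      (fun v _ => trm_le m ν hν v) (by rw [hτsum, ht₁def])
    have hLinvals' : ∀ v ∈ Lin, ν v = if tauL a v < 0 then m v else 0 :=
      fun v hv => hLinvals v hv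
    apply Finsupp.ext
    intro v
    by_cases hvN : v ∈ Neg
    · rw [hN v hvN, hν₁eqm v (Finset.mem_union.2 (Or.inl hvN))]
    · by_cases hvL : v ∈ Lin
      · rw [hLinvals' v hvL, hν₁Lin v hvL]
      · have hv0 : ν v = 0 := by
          by_contra hc
          rcases hsub (Finsupp.mem_support_iff.2 hc) with h | h
          · exact hvN h
          · exact hvL h
        have hv1 : ν₁ v = 0 := by
          rw [hν₁app, if_neg]
          intro hm
          rcases Finset.mem_union.1 hm with h | h
          · exact hvN h
          · exact hvL (Finset.mem_filter.1 h).1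
        rw [hv0, hv1]
  have hcoeff₁ : coeffF m (σ + t₁ • a) = trm m ν₁ := by
    rw [coeff_eq m (σ + t₁ • a) {ν₁}
      (by intro ν hν; rw [Finset.mem_singleton] at hν; rw [hν]; exact hsumν₁)
      (fun ν h1 h2 => Finset.mem_singleton.2 (huniq_min ν h1 h2)), Finset.sum_singleton]
  -- the ν₃ block (maximal point)
  set LinPos : Finset (ℝ × V) := Lin.filter (fun v => 0 < tauL a v) with hLinPosdef
  set ν₃ : (ℝ × V) →₀ ℕ := Finsupp.onFinset (Neg ∪ LinPos)
    (fun v => if v ∈ Neg ∪ LinPos then m v else 0)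
    (fun v h => by by_contra hc; exact h (if_neg hc)) with hν₃def
  have hν₃app : ∀ v, ν₃ v = if v ∈ Neg ∪ LinPos then m v else 0 := fun v => rfl
  have hν₃mem : ∀ v, ν₃ v ≠ 0 → v ∈ Neg ∪ LinPos := by
    intro v h
    by_contra hc
    rw [hν₃app, if_neg hc] at h
    exact h rfl
  have hν₃supp : ν₃.support ⊆ Neg ∪ Lin := by
    intro v hv
    rcases Finset.mem_union.1 (hν₃mem v (Finsupp.mem_support_iff.1 hv)) with h | h
    · exact Finset.mem_union.2 (Or.inl h)
    · exact Finset.mem_union.2 (Or.inr (Finset.mem_filter.1 h).1)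
  have hν₃eqm : ∀ v ∈ Neg ∪ LinPos, ν₃ v = m v := by
    intro v hv; rw [hν₃app, if_pos hv]
  have hν₃trm : trm m ν₃ ≠ 0 := by
    rw [trm, Finset.prod_ne_zero_iff]
    intro v hv
    have h1 := Finsupp.mem_support_iff.1 hv
    have h2 : ν₃ v = m v := hν₃eqm v (hν₃mem v h1)
    rw [h2, Nat.choose_self]
    exact mul_ne_zero (pow_ne_zero _ (by norm_num)) (by norm_num)
  have hν₃Lin : ∀ v ∈ Lin, ν₃ v = if 0 < tauL a v then m v else 0 := by
    intro v hv
    by_cases hc : 0 < tauL a v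
    · rw [if_pos hc]
      exact hν₃eqm v (Finset.mem_union.2 (Or.inr (Finset.mem_filter.2 ⟨hv, hc⟩)))
    · rw [if_neg hc, hν₃app, if_neg]
      intro hm
      rcases Finset.mem_union.1 hm with h | h
      · exact (Finset.disjoint_left.1 hdisj h) hv
      · exact hc (Finset.mem_filter.1 h).2
  have hsumν₃ : (ν₃.sum fun v k => k • v) = σ + t₃ • a := by
    rw [sum_eq_finset ν₃ (Neg ∪ Lin) hν₃supp, Finset.sum_union hdisj]
    congr 1
    · rw [hσdef]
      exact Finset.sum_congr rfl fun v hv =>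
        by rw [hν₃eqm v (Finset.mem_union.2 (Or.inl hv))]
    · have h1 : ∀ v ∈ Lin, ν₃ v • v = (if 0 < tauL a v then (m v : ℝ) * tauL a v else 0) • a := by
        intro v hv
        rw [hν₃Lin v hv]
        by_cases hc : 0 < tauL a v
        · rw [if_pos hc, if_pos hc, hsmul_line v hv]
        · rw [if_neg hc, if_neg hc, zero_smul, zero_smul]
      rw [Finset.sum_congr rfl h1, ← Finset.sum_smul]
  have huniq_max : ∀ ν : (ℝ × V) →₀ ℕ, trm m ν ≠ 0 →
      (ν.sum fun v k => k • v) = σ + t₃ • a → ν = ν₃ := by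
    intro ν hν hsum
    obtain ⟨hN, hsub, hτsum⟩ := classify m w a ha2 hψa Neg Lin hNeg hLin ν hν t₃
      (by rw [hsum, hσdef])
    have hτne' : ∀ v ∈ Lin, -(tauL a v) ≠ 0 := fun v hv => neg_ne_zero.2 (hτne v hv)
    have hmaxheq : ∑ v ∈ Lin, (ν v : ℝ) * (-(tauL a v))
        = ∑ v ∈ Lin, if -(tauL a v) < 0 then (m v : ℝ) * (-(tauL a v)) else 0 := by
      have h1 : ∑ v ∈ Lin, (ν v : ℝ) * (-(tauL a v))
          = -(∑ v ∈ Lin, (ν v : ℝ) * tauL a v) := by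
        rw [← Finset.sum_neg_distrib]
        exact Finset.sum_congr rfl fun v _ => by ring
      have h2 : ∑ v ∈ Lin, (if -(tauL a v) < 0 then (m v : ℝ) * (-(tauL a v)) else 0)
          = -(∑ v ∈ Lin, if 0 < tauL a v then (m v : ℝ) * tauL a v else 0) := by
        rw [← Finset.sum_neg_distrib]
        apply Finset.sum_congr rfl
        intro v hv
        by_cases hc : 0 < tauL a v
        · rw [if_pos (neg_lt_zero.2 hc), if_pos hc]; ring
        · rw [if_neg (by simpa using hc), if_neg hc]; ring
      rw [h1, h2, hτsum, ht₃def]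
    have hLinvals := extremal_min Lin (fun v => -(tauL a v)) m (fun v => ν v) hτne'
      (fun v _ => trm_le m ν hν v) hmaxheq
    have hLinvals' : ∀ v ∈ Lin, ν v = if 0 < tauL a v then m v else 0 := by
      intro v hv
      have := hLinvals v hv
      simp only [neg_lt_zero] at this
      exact this
    apply Finsupp.ext
    intro v
    by_cases hvN : v ∈ Neg
    · rw [hN v hvN, hν₃eqm v (Finset.mem_union.2 (Or.inl hvN))]
    · by_cases hvL : v ∈ Lin
      · rw [hLinvals' v hvL, hν₃Lin v hvL]
      · have hv0 : ν v = 0 := by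
          by_contra hc
          rcases hsub (Finsupp.mem_support_iff.2 hc) with h | h
          · exact hvN h
          · exact hvL h
        have hv1 : ν₃ v = 0 := by
          rw [hν₃app, if_neg]
          intro hm
          rcases Finset.mem_union.1 hm with h | h
          · exact hvN h
          · exact hvL (Finset.mem_filter.1 h).1
        rw [hv0, hv1]
  have hcoeff₃ : coeffF m (σ + t₃ • a) = trm m ν₃ := by
    rw [coeff_eq m (σ + t₃ • a) {ν₃}
      (by intro ν hν; rw [Finset.mem_singleton] at hν; rw [hν]; exact hsumν₃)
      (fun ν h1 h2 => Finset.mem_singleton.2 (huniq_max ν h1 h2)), Finset.sum_singleton]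
  -- the flip family for the middle point
  set flp : (ℝ × V) → ((ℝ × V) →₀ ℕ) := fun z => Finsupp.onFinset (insert z (Neg ∪ LinNeg))
    (fun v => if v = z then (if tauL a z < 0 then m z - 1 else 1) else ν₁ v)
    (fun v h => by
      by_cases hc : v = z
      · rw [hc]; exact Finset.mem_insert_self _ _
      · simp only [if_neg hc] at h
        exact Finset.mem_insert_of_mem (hν₁mem v h)) with hflpdef
  have hflpapp : ∀ z v, flp z v
      = if v = z then (if tauL a z < 0 then m z - 1 else 1) else ν₁ v := fun z v => rfl
  have hflpsupp : ∀ z ∈ Lin, (flp z).support ⊆ Neg ∪ Lin := by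
    intro z hz v hv
    have h1 : (if v = z then (if tauL a z < 0 then m z - 1 else 1) else ν₁ v) ≠ 0 :=
      Finsupp.mem_support_iff.1 hv
    by_cases hc : v = z
    · rw [hc]; exact Finset.mem_union.2 (Or.inr hz)
    · rw [if_neg hc] at h1
      rcases Finset.mem_union.1 (hν₁mem v h1) with h | h
      · exact Finset.mem_union.2 (Or.inl h)
      · exact Finset.mem_union.2 (Or.inr (Finset.mem_filter.1 h).1)
  have hν₁K : ∑ v ∈ Neg ∪ Lin, ν₁ v • v = σ + t₁ • a := by
    rw [← sum_eq_finset ν₁ _ hν₁supp, hsumν₁]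
  have hsum_flp : ∀ z ∈ Umin, ((flp z).sum fun v k => k • v) = σ + (t₁ + u) • a := by
    intro z hz
    obtain ⟨hzL, hzu⟩ := Finset.mem_filter.1 hz
    have hzK : z ∈ Neg ∪ Lin := Finset.mem_union.2 (Or.inr hzL)
    have hz_line : z = tauL a z • a := hvline z hzL
    have hmz : m z ≠ 0 := hmLin z hzL
    rw [sum_eq_finset (flp z) (Neg ∪ Lin) (hflpsupp z hzL)]
    rw [← Finset.add_sum_erase _ (fun v => flp z v • v) hzK]
    have hrest : ∑ v ∈ (Neg ∪ Lin).erase z, flp z v • v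
        = ∑ v ∈ (Neg ∪ Lin).erase z, ν₁ v • v := by
      apply Finset.sum_congr rfl
      intro v hv
      rw [hflpapp, if_neg (Finset.mem_erase.1 hv).1]
    have hsplit : ν₁ z • z + ∑ v ∈ (Neg ∪ Lin).erase z, ν₁ v • v = σ + t₁ • a := by
      rw [Finset.add_sum_erase _ (fun v => ν₁ v • v) hzK]; exact hν₁K
    rw [hrest]
    by_cases hc : tauL a z < 0
    · -- here ν₁ z = m z, flp z z = m z - 1
      have hν₁z : ν₁ z = m z := by rw [hν₁Lin z hzL, if_pos hc]
      have hflpz : flp z z = m z - 1 := by rw [hflpapp, if_pos rfl, if_pos hc]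
      have hu_eq : u = -(tauL a z) := by rw [← hzu, abs_of_neg hc]
      obtain ⟨k, hk⟩ : ∃ k, m z = k + 1 := ⟨m z - 1, by omega⟩
      have hν₁zsmul : ν₁ z • z = flp z z • z + z := by
        rw [hν₁z, hflpz, hk]
        simp [succ_nsmul]
      have h2 : flp z z • z + ∑ v ∈ (Neg ∪ Lin).erase z, ν₁ v • v = σ + t₁ • a - z := by
        rw [← hsplit, hν₁zsmul]; abel
      rw [h2]
      have h3 : σ + t₁ • a - z = σ + (t₁ + u) • a := by
        conv_lhs => rw [hz_line]
        rw [hu_eq, add_smul, neg_smul]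
        abel
      rw [h3]
    · have hc' : 0 < tauL a z := (hτne z hzL).lt_or_gt.resolve_left (by simpa using hc)
      have hν₁z : ν₁ z = 0 := by rw [hν₁Lin z hzL, if_neg hc]
      have hflpz : flp z z = 1 := by rw [hflpapp, if_pos rfl, if_neg hc]
      have hu_eq : u = tauL a z := by rw [← hzu, abs_of_pos hc']
      have h2 : flp z z • z + ∑ v ∈ (Neg ∪ Lin).erase z, ν₁ v • v = σ + t₁ • a + z := by
        rw [← hsplit, hν₁z, hflpz]
        simp
        abel
      rw [h2]
      conv_lhs => rw [hz_line]
      rw [hu_eq, add_smul]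
      abel
  have htrm_flp : ∀ z ∈ Umin, trm m (flp z) = -(m z : ℤ) * trm m ν₁ := by
    intro z hz
    obtain ⟨hzL, hzu⟩ := Finset.mem_filter.1 hz
    have hzK : z ∈ Neg ∪ Lin := Finset.mem_union.2 (Or.inr hzL)
    have hmz : m z ≠ 0 := hmLin z hzL
    rw [trm_eq_prod m (flp z) (Neg ∪ Lin) (hflpsupp z hzL),
        trm_eq_prod m ν₁ (Neg ∪ Lin) hν₁supp,
        ← Finset.mul_prod_erase _ (fun v => ((-1 : ℤ) ^ flp z v * (Nat.choose (m v) (flp z v) : ℤ))) hzK,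
        ← Finset.mul_prod_erase _ (fun v => ((-1 : ℤ) ^ ν₁ v * (Nat.choose (m v) (ν₁ v) : ℤ))) hzK]
    have hrest : ∏ v ∈ (Neg ∪ Lin).erase z, ((-1 : ℤ) ^ flp z v * (Nat.choose (m v) (flp z v) : ℤ))
        = ∏ v ∈ (Neg ∪ Lin).erase z, ((-1 : ℤ) ^ ν₁ v * (Nat.choose (m v) (ν₁ v) : ℤ)) := by
      apply Finset.prod_congr rfl
      intro v hv
      rw [hflpapp, if_neg (Finset.mem_erase.1 hv).1]
    rw [hrest]
    have hfactor : ((-1 : ℤ) ^ flp z z * (Nat.choose (m z) (flp z z) : ℤ))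
        = -(m z : ℤ) * ((-1 : ℤ) ^ ν₁ z * (Nat.choose (m z) (ν₁ z) : ℤ)) := by
      by_cases hc : tauL a z < 0
      · have hν₁z : ν₁ z = m z := by rw [hν₁Lin z hzL, if_pos hc]
        have hflpz : flp z z = m z - 1 := by rw [hflpapp, if_pos rfl, if_pos hc]
        obtain ⟨k, hk⟩ : ∃ k, m z = k + 1 := ⟨m z - 1, by omega⟩
        rw [hν₁z, hflpz, hk]
        simp only [Nat.add_sub_cancel, Nat.choose_succ_self_right, Nat.choose_self,
          Nat.cast_one, mul_one, Nat.cast_add, Nat.cast_one, pow_succ]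
        ring
      · have hν₁z : ν₁ z = 0 := by rw [hν₁Lin z hzL, if_neg hc]
        have hflpz : flp z z = 1 := by rw [hflpapp, if_pos rfl, if_neg hc]
        rw [hν₁z, hflpz]
        simp [Nat.choose_one_right]
    rw [hfactor]
    ring
  have hflp_inj : ∀ x ∈ Umin, ∀ y ∈ Umin, flp x = flp y → x = y := by
    intro x hx y hy hxy
    by_contra hne'
    have h1 : flp x x = flp y x := by rw [hxy]
    rw [hflpapp, if_pos rfl, hflpapp, if_neg hne'] at h1
    obtain ⟨hxL, hxu⟩ := Finset.mem_filter.1 hx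
    have hmx : m x ≠ 0 := hmLin x hxL
    by_cases hc : tauL a x < 0
    · rw [if_pos hc] at h1
      rw [hν₁Lin x hxL, if_pos hc] at h1
      omega
    · rw [if_neg hc] at h1
      rw [hν₁Lin x hxL, if_neg hc] at h1
      omega
  have hbwd₂ : ∀ ν : (ℝ × V) →₀ ℕ, trm m ν ≠ 0 →
      (ν.sum fun v k => k • v) = σ + (t₁ + u) • a → ν ∈ Umin.image flp := by
    intro ν hν hsum
    obtain ⟨hN, hsub, hτsum⟩ := classify m w a ha2 hψa Neg Lin hNeg hLin ν hν (t₁ + u)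
      (by rw [hsum, hσdef])
    obtain ⟨z, hzL, hzu, hvals⟩ := extremal_mid Lin (fun v => tauL a v) m (fun v => ν v) u hu
      hτu (fun v _ => trm_le m ν hν v) (by rw [hτsum, ht₁def])
    have hvals' : ∀ v ∈ Lin, ν v = if v = z then (if tauL a v < 0 then m v - 1 else 1)
        else if tauL a v < 0 then m v else 0 := fun v hv => hvals v hv
    refine Finset.mem_image.2 ⟨z, Finset.mem_filter.2 ⟨hzL, hzu⟩, ?_⟩
    apply Finsupp.ext
    intro v
    rw [hflpapp]
    by_cases hvz : v = z
    · subst hvz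
      rw [if_pos rfl, hvals' v hzL, if_pos rfl]
    · rw [if_neg hvz]
      by_cases hvN : v ∈ Neg
      · rw [hν₁eqm v (Finset.mem_union.2 (Or.inl hvN)), hN v hvN]
      · by_cases hvL : v ∈ Lin
        · rw [hvals' v hvL, if_neg hvz, hν₁Lin v hvL]
        · have hv0 : ν v = 0 := by
            by_contra hc
            rcases hsub (Finsupp.mem_support_iff.2 hc) with h | h
            · exact hvN h
            · exact hvL h
          have hv1 : ν₁ v = 0 := by
            rw [hν₁app, if_neg]
            intro hm
            rcases Finset.mem_union.1 hm with h | h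
            · exact hvN h
            · exact hvL (Finset.mem_filter.1 h).1
          rw [hv0, hv1]
  have hcoeff₂ : coeffF m (σ + (t₁ + u) • a) = ∑ z ∈ Umin, trm m (flp z) := by
    rw [coeff_eq m (σ + (t₁ + u) • a) (Umin.image flp)
      (by
        intro ν hν
        obtain ⟨z, hz, hz2⟩ := Finset.mem_image.1 hν
        rw [← hz2]
        exact hsum_flp z hz) hbwd₂]
    exact Finset.sum_image hflp_inj
  have hcoeff₂ne : coeffF m (σ + (t₁ + u) • a) ≠ 0 := by
    rw [hcoeff₂, Finset.sum_congr rfl htrm_flp]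
    have hS : 0 < ∑ z ∈ Umin, (m z : ℤ) := by
      obtain ⟨z₀, hz₀⟩ := hUne
      refine Finset.sum_pos' (fun z hz => by positivity) ⟨z₀, hz₀, ?_⟩
      have := hmLin z₀ (Finset.mem_filter.1 hz₀).1
      omega
    have : ∑ z ∈ Umin, -(m z : ℤ) * trm m ν₁ = -(∑ z ∈ Umin, (m z : ℤ)) * trm m ν₁ := by
      rw [← Finset.sum_mul, ← Finset.sum_neg_distrib]
    rw [this]
    exact mul_ne_zero (neg_ne_zero.2 (ne_of_gt hS)) hν₁trm
  -- the three points lie on the paraboloid; if M ≥ 2 they are distinct: contradiction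
  have hcoeff₁ne : coeffF m (σ + t₁ • a) ≠ 0 := by rw [hcoeff₁]; exact hν₁trm
  have hcoeff₃ne : coeffF m (σ + t₃ • a) ≠ 0 := by rw [hcoeff₃]; exact hν₃trm
  have hM1 : M = 1 := by
    by_contra hMne
    have hM2 : 2 ≤ M := by
      have h1 : 1 ≤ m a := Nat.one_le_iff_ne_zero.2 ham
      have h2 : m a ≤ M := by
        rw [hMdef]
        exact Finset.single_le_sum (f := m) (fun _ _ => Nat.zero_le _) haLin
      omega
    -- distinctness of parameters
    have hts : t₃ - t₁ = ∑ v ∈ Lin, (m v : ℝ) * |tauL a v| := by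
      rw [ht₁def, ht₃def, ← Finset.sum_sub_distrib]
      apply Finset.sum_congr rfl
      intro v hv
      rcases (hτne v hv).lt_or_gt with h | h
      · rw [if_neg (by linarith), if_pos h, abs_of_neg h]; ring
      · rw [if_pos h, if_neg (by linarith), abs_of_pos h]; ring
    have hMu : (M : ℝ) * u ≤ t₃ - t₁ := by
      rw [hts, hMdef, Nat.cast_sum, Finset.sum_mul]
      apply Finset.sum_le_sum
      intro v hv
      exact mul_le_mul_of_nonneg_left (hτu v hv) (Nat.cast_nonneg _)
    have hM2' : (2 : ℝ) ≤ (M : ℝ) := by exact_mod_cast hM2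
    have h2u : 2 * u ≤ t₃ - t₁ := le_trans (by nlinarith) hMu
    -- the paraboloid quadratic
    obtain ⟨c, r, hr, hp⟩ := hpara
    have hn2 : ‖a.2‖ ≠ 0 := norm_ne_zero_iff.2 ha2
    have hA : r * ‖a.2‖ ^ 2 ≠ 0 := by positivity
    have hq : ∀ t : ℝ, coeffF m (σ + t • a) ≠ 0 →
        (r * ‖a.2‖ ^ 2) * t ^ 2 + (2 * r * ⟪(σ - c).2, a.2⟫ - a.1) * t
          + (r * ‖(σ - c).2‖ ^ 2 - (σ - c).1) = 0 := by
      intro t ht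
      have h := hp _ ht
      have hrw : σ + t • a - c = (σ - c) + t • a := by abel
      rw [hrw] at h
      have h1 : ((σ - c) + t • a).1 = (σ - c).1 + t * a.1 := rfl
      have h2 : ((σ - c) + t • a).2 = (σ - c).2 + t • a.2 := rfl
      rw [h1, h2, norm_add_sq_real, real_inner_smul_right, norm_smul] at h
      rw [mul_pow, Real.norm_eq_abs, sq_abs] at h
      linear_combination -h
    have hne12 : t₁ < t₁ + u := by linarith
    have hne13 : t₁ < t₃ := by linarith
    have hne23 : t₁ + u < t₃ := by linarith
    exact quad_three_roots (r * ‖a.2‖ ^ 2) (2 * r * ⟪(σ - c).2, a.2⟫ - a.1)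
      (r * ‖(σ - c).2‖ ^ 2 - (σ - c).1) t₁ (t₁ + u) t₃ hA
      hne12.ne hne13.ne hne23.ne
      (hq t₁ hcoeff₁ne) (hq (t₁ + u) hcoeff₂ne) (hq t₃ hcoeff₃ne)
  -- conclude : Lin = {a}, m a = 1
  have hma1 : m a = 1 := by
    have h2 : m a ≤ M := by
      rw [hMdef]
      exact Finset.single_le_sum (f := m) (fun _ _ => Nat.zero_le _) haLin
    have h1 : 1 ≤ m a := Nat.one_le_iff_ne_zero.2 ham
    omega
  have hLinsing : Lin = {a} := by
    apply Finset.eq_singleton_iff_unique_mem.2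
    refine ⟨haLin, ?_⟩
    intro b hb
    by_contra hba
    have hbe : b ∈ Lin.erase a := Finset.mem_erase.2 ⟨hba, hb⟩
    have h1 : m a + ∑ v ∈ Lin.erase a, m v = M := by
      rw [hMdef]; exact Finset.add_sum_erase _ _ haLin
    have h2 : m b ≤ ∑ v ∈ Lin.erase a, m v :=
      Finset.single_le_sum (f := m) (fun _ _ => Nat.zero_le _) hbe
    have h3 : 1 ≤ m b := Nat.one_le_iff_ne_zero.2 (hmLin b hb)
    omega
  refine ⟨?_, hma1⟩
  ext v
  simp only [Set.mem_inter_iff, Set.mem_setOf_eq, Set.mem_singleton_iff]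
  constructor
  · rintro ⟨⟨t, rfl⟩, hvm, hv2⟩
    have hψv : psiL w (t • a) = 0 := by rw [map_smul, hψa, smul_zero]
    have hmem : t • a ∈ Lin := (hLin _).2 ⟨hvm, hψv⟩
    rw [hLinsing, Finset.mem_singleton] at hmem
    exact hmem
  · rintro rfl
    exact ⟨⟨1, (one_smul ℝ v).symm⟩, haΦ, ha2⟩
end

section
/- Let Ṽ = ℝ ⊕ V and let m : Ṽ → ℕ satisfy the conditions (A) (m(0) = 0; S(m) ≠ ∅; the half-space finiteness condition; S(m) spans Ṽ; S(m)_re irreducible), and suppose the support Λ(m) of F(m) lies on a paraboloid p₁(λ̃ − c̃) = r‖p₂(λ̃ − c̃)‖². Then for all α̃, β̃ ∈ S(m)_re, the ratio 2⟨⟨α̃,β̃⟩⟩/‖p₂(α̃)‖² is an integer, where ⟨⟨ṽ₁,ṽ₂⟩⟩ = ⟨p₂(ṽ₁), p₂(ṽ₂)⟩. -/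
open scoped RealInnerProductSpace

set_option linter.unusedSectionVars false
set_option maxHeartbeats 1600000

namespace S19

open Function

variable {V : Type*} [NormedAddCommGroup V] [InnerProductSpace ℝ V]

/-- The level functional attached to `ñ = (1, w)`. -/
noncomputable def lev (w : V) (x : ℝ × V) : ℝ := x.1 + ⟪x.2, w⟫

lemma lev_add (w : V) (x y : ℝ × V) : lev w (x + y) = lev w x + lev w y := by
  simp only [lev, Prod.fst_add, Prod.snd_add, inner_add_left]; ring

lemma lev_smul (w : V) (t : ℝ) (x : ℝ × V) : lev w (t • x) = t * lev w x := by
  simp only [lev, Prod.smul_fst, Prod.smul_snd, smul_eq_mul, real_inner_smul_left]; ring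

lemma lev_zero (w : V) : lev w (0 : ℝ × V) = 0 := by simp [lev]

lemma lev_nsmul (w : V) (k : ℕ) (x : ℝ × V) : lev w (k • x) = k * lev w x := by
  rw [← Nat.cast_smul_eq_nsmul ℝ, lev_smul]

lemma lev_sub (w : V) (x y : ℝ × V) : lev w (x - y) = lev w x - lev w y := by
  simp only [lev, Prod.fst_sub, Prod.snd_sub, inner_sub_left]; ring

/-- The generic term of the expansion of `F(m)`. -/
noncomputable def term (m : ℝ × V → ℕ) (ν : (ℝ × V) →₀ ℕ) : ℤ :=
  ∏ v ∈ ν.support, ((-1 : ℤ) ^ ν v * (Nat.choose (m v) (ν v) : ℤ))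

/-- The weighted sum (exponent) of `ν`. -/
noncomputable def wsum (ν : (ℝ × V) →₀ ℕ) : ℝ × V := ν.sum fun v k => k • v

lemma coeffF_def (m : ℝ × V → ℕ) (l : ℝ × V) :
    coeffF m l = ∑ᶠ ν ∈ {ν : (ℝ × V) →₀ ℕ | wsum ν = l}, term m ν := rfl

lemma term_le {m : ℝ × V → ℕ} {ν : (ℝ × V) →₀ ℕ} (h : term m ν ≠ 0) (v : ℝ × V) :
    ν v ≤ m v := by
  by_contra hlt
  push_neg at hlt
  have hv : v ∈ ν.support := Finsupp.mem_support_iff.2 (by omega)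
  exact h (Finset.prod_eq_zero hv (by
    rw [Nat.choose_eq_zero_of_lt hlt]; simp))

lemma term_supp {m : ℝ × V → ℕ} {ν : (ℝ × V) →₀ ℕ} (h : term m ν ≠ 0) {v : ℝ × V}
    (hv : ν v ≠ 0) : v ∈ support m := by
  have h1 := term_le h v
  simp only [mem_support]
  intro h0
  omega

lemma lvl_eq_sum (w : V) (ν : (ℝ × V) →₀ ℕ) :
    lev w (wsum ν) = ∑ v ∈ ν.support, (ν v : ℝ) * lev w v := by
  classical
  rw [wsum, Finsupp.sum]
  induction ν.support using Finset.induction_on with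
  | empty => simp [lev_zero]
  | insert _ _ h ih =>
      rw [Finset.sum_insert h, Finset.sum_insert h, lev_add, lev_nsmul, ih]

lemma wsum_add (ν₁ ν₂ : (ℝ × V) →₀ ℕ) : wsum (ν₁ + ν₂) = wsum ν₁ + wsum ν₂ := by
  classical
  exact Finsupp.sum_add_index' (fun v => by simp) (fun v k₁ k₂ => add_smul k₁ k₂ v)

lemma wsum_single (v : ℝ × V) (k : ℕ) : wsum (Finsupp.single v k) = k • v := by
  classical
  exact Finsupp.sum_single_index (by simp)

lemma wsum_zero : wsum (0 : (ℝ × V) →₀ ℕ) = 0 := by simp [wsum]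

lemma term_zero (m : ℝ × V → ℕ) : term m 0 = 1 := by simp [term]

lemma term_mul_of_disjoint {m : ℝ × V → ℕ} {ν₁ ν₂ : (ℝ × V) →₀ ℕ}
    (h : Disjoint ν₁.support ν₂.support) :
    term m (ν₁ + ν₂) = term m ν₁ * term m ν₂ := by
  classical
  rw [term, Finsupp.support_add_eq h, Finset.prod_union h, term, term]
  congr 1
  · apply Finset.prod_congr rfl
    intro v hv
    have : ν₂ v = 0 := by
      by_contra h2
      exact Finset.disjoint_left.1 h hv (Finsupp.mem_support_iff.2 h2)
    simp [Finsupp.add_apply, this]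
  · apply Finset.prod_congr rfl
    intro v hv
    have : ν₁ v = 0 := by
      by_contra h2
      exact Finset.disjoint_right.1 h hv (Finsupp.mem_support_iff.2 h2)
    simp [Finsupp.add_apply, this]

lemma term_single (m : ℝ × V → ℕ) (v : ℝ × V) (k : ℕ) :
    term m (Finsupp.single v k) = (-1 : ℤ) ^ k * (Nat.choose (m v) k : ℤ) := by
  classical
  rcases Nat.eq_zero_or_pos k with hk | hk
  · subst hk; simp [term]
  · rw [term, Finsupp.support_single_ne_zero v (by omega)]
    simp

open Fin.NatCast in
/-- Finiteness of the set of admissible `ν` with level at most `C`. -/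
lemma finite_level {m : ℝ × V → ℕ} {w : V}
    (hh : ∀ C : ℝ, {s ∈ support m | lev w s ≤ C}.Finite) (C : ℝ) :
    {ν : (ℝ × V) →₀ ℕ | term m ν ≠ 0 ∧ lev w (wsum ν) ≤ C}.Finite := by
  classical
  set N := (hh 0).toFinset with hN
  set B : ℝ := ∑ s ∈ N, (m s : ℝ) * (-(lev w s)) with hBdef
  have hB : 0 ≤ B := by
    apply Finset.sum_nonneg
    intro s hs
    have : lev w s ≤ 0 := ((hh 0).mem_toFinset.1 hs).2
    exact mul_nonneg (Nat.cast_nonneg _) (neg_nonneg.2 this)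
  set C' : ℝ := max (C + B) 0 with hC'
  set T := (hh C').toFinset with hT
  have hmain : ∀ ν : (ℝ × V) →₀ ℕ, term m ν ≠ 0 → lev w (wsum ν) ≤ C →
      ∀ v ∈ ν.support, v ∈ T := by
    intro ν hterm hlvl v hv
    have hsupp : ∀ x ∈ ν.support, x ∈ support m := fun x hx =>
      term_supp hterm (Finsupp.mem_support_iff.1 hx)
    have hkey : ∑ x ∈ ν.support, (ν x : ℝ) * lev w x ≤ C := by
      rw [← lvl_eq_sum]; exact hlvl
    set P := ν.support.filter (fun x => 0 < lev w x) with hP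
    set Nn := ν.support.filter (fun x => ¬ 0 < lev w x) with hNn
    have hsplit : ∑ x ∈ P, (ν x : ℝ) * lev w x + ∑ x ∈ Nn, (ν x : ℝ) * lev w x
        = ∑ x ∈ ν.support, (ν x : ℝ) * lev w x := Finset.sum_filter_add_sum_filter_not _ _ _
    have hNnB : -∑ x ∈ Nn, (ν x : ℝ) * lev w x ≤ B := by
      rw [← Finset.sum_neg_distrib]
      have h1 : ∀ x ∈ Nn, -((ν x : ℝ) * lev w x) ≤ (m x : ℝ) * (-(lev w x)) := by
        intro x hx
        have hxle : ¬ 0 < lev w x := (Finset.mem_filter.1 hx).2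
        push_neg at hxle
        have : (ν x : ℝ) ≤ (m x : ℝ) := by
          exact_mod_cast term_le hterm x
        nlinarith
      calc ∑ x ∈ Nn, -((ν x : ℝ) * lev w x) ≤ ∑ x ∈ Nn, (m x : ℝ) * (-(lev w x)) :=
            Finset.sum_le_sum h1
        _ ≤ B := by
            apply Finset.sum_le_sum_of_subset_of_nonneg
            · intro x hx
              rcases Finset.mem_filter.1 hx with ⟨hx1, hx2⟩
              push_neg at hx2
              exact (hh 0).mem_toFinset.2 ⟨hsupp x hx1, hx2⟩
            · intro x hx _
              have : lev w x ≤ 0 := ((hh 0).mem_toFinset.1 hx).2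
              exact mul_nonneg (Nat.cast_nonneg _) (neg_nonneg.2 this)
    have hPle : ∑ x ∈ P, (ν x : ℝ) * lev w x ≤ C + B := by linarith
    apply (hh C').mem_toFinset.2
    refine ⟨hsupp v hv, ?_⟩
    by_cases hvpos : 0 < lev w v
    · have hvP : v ∈ P := Finset.mem_filter.2 ⟨hv, hvpos⟩
      have h1 : lev w v ≤ (ν v : ℝ) * lev w v := by
        have : (1 : ℝ) ≤ (ν v : ℝ) := by
          have := Finsupp.mem_support_iff.1 hv
          exact_mod_cast Nat.one_le_iff_ne_zero.2 this
        nlinarith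
      have h2 : (ν v : ℝ) * lev w v ≤ ∑ x ∈ P, (ν x : ℝ) * lev w x := by
        apply Finset.single_le_sum _ hvP
        intro x hx
        have : 0 < lev w x := (Finset.mem_filter.1 hx).2
        exact mul_nonneg (Nat.cast_nonneg _) this.le
      have : lev w v ≤ C + B := by linarith
      exact le_trans this (le_max_left _ _)
    · push_neg at hvpos
      exact le_trans hvpos (le_max_right _ _)
  -- wrap-up: the set embeds in a finite type
  set M : ℕ := T.sup m with hM
  have hfin : Finite {ν : (ℝ × V) →₀ ℕ | term m ν ≠ 0 ∧ lev w (wsum ν) ≤ C} := by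
    apply Finite.of_injective
      (fun ν => (fun v : T => (ν.1 (v : ℝ × V) : Fin (M + 1))))
    · intro ν₁ ν₂ hyp
      ext v
      by_cases hv : v ∈ T
      · have := congrFun hyp ⟨v, hv⟩
        have hb1 : ν₁.1 v ≤ M := by
          by_cases h1 : v ∈ ν₁.1.support
          · exact le_trans (term_le ν₁.2.1 v) (Finset.le_sup hv)
          · simp [Finsupp.notMem_support_iff.1 h1]
        have hb2 : ν₂.1 v ≤ M := by
          by_cases h1 : v ∈ ν₂.1.support
          · exact le_trans (term_le ν₂.2.1 v) (Finset.le_sup hv)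
          · simp [Finsupp.notMem_support_iff.1 h1]
        have : (ν₁.1 v : Fin (M+1)) = (ν₂.1 v : Fin (M+1)) := this
        have := congrArg Fin.val this
        rwa [Fin.val_cast_of_lt (by omega), Fin.val_cast_of_lt (by omega)] at this
      · have h1 : v ∉ ν₁.1.support := fun hc => hv (hmain ν₁.1 ν₁.2.1 ν₁.2.2 v hc)
        have h2 : v ∉ ν₂.1.support := fun hc => hv (hmain ν₂.1 ν₂.2.1 ν₂.2.2 v hc)
        rw [Finsupp.notMem_support_iff.1 h1, Finsupp.notMem_support_iff.1 h2]
  exact Set.toFinite _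

lemma coeffF_eq_sum {m : ℝ × V → ℕ} {l : ℝ × V}
    (hfin : {ν : (ℝ × V) →₀ ℕ | term m ν ≠ 0 ∧ wsum ν = l}.Finite) :
    coeffF m l = ∑ ν ∈ hfin.toFinset, term m ν := by
  classical
  rw [coeffF_def]
  have hf : ({ν : (ℝ × V) →₀ ℕ | wsum ν = l} ∩ support (term m)).Finite := by
    apply hfin.subset
    rintro ν ⟨h1, h2⟩
    exact ⟨h2, h1⟩
  rw [finsum_mem_eq_sum _ hf]
  apply Finset.sum_congr _ (fun _ _ => rfl)
  ext ν
  simp only [Set.Finite.mem_toFinset, Set.mem_inter_iff, Set.mem_setOf_eq, mem_support]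
  tauto

lemma exists_active_of_coeffF_ne_zero {m : ℝ × V → ℕ} {l : ℝ × V}
    (hfin : {ν : (ℝ × V) →₀ ℕ | term m ν ≠ 0 ∧ wsum ν = l}.Finite)
    (h : coeffF m l ≠ 0) : ∃ ν, term m ν ≠ 0 ∧ wsum ν = l := by
  by_contra hc
  push_neg at hc
  apply h
  rw [coeffF_eq_sum hfin]
  apply Finset.sum_eq_zero
  intro ν hν
  rw [Set.Finite.mem_toFinset] at hν
  exact (hc ν hν.1 hν.2).elim

/-- The countable set of achievable exponents. -/
def Ach (m : ℝ × V → ℕ) : Set (ℝ × V) := wsum '' {ν | term m ν ≠ 0}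

lemma wsum_mem_Ach {m : ℝ × V → ℕ} {ν : (ℝ × V) →₀ ℕ} (h : term m ν ≠ 0) :
    wsum ν ∈ Ach m := ⟨ν, h, rfl⟩

lemma zero_mem_Ach (m : ℝ × V → ℕ) : (0 : ℝ × V) ∈ Ach m :=
  ⟨0, by simp only [Set.mem_setOf_eq, term_zero]; exact one_ne_zero, wsum_zero⟩

lemma single_mem_Ach {m : ℝ × V → ℕ} {v : ℝ × V} (hv : v ∈ support m) :
    v ∈ Ach m := by
  refine ⟨Finsupp.single v 1, ?_, by rw [wsum_single, one_smul]⟩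
  simp only [Set.mem_setOf_eq, term_single, pow_one, Nat.choose_one_right, neg_mul, one_mul,
    ne_eq, neg_eq_zero, Int.natCast_eq_zero]
  rwa [mem_support] at hv

lemma Ach_countable {m : ℝ × V → ℕ}
    (hh : ∀ C : ℝ, {s ∈ support m | lev (0 : V) s ≤ C}.Finite) :
    (Ach m).Countable := by
  have : {ν : (ℝ × V) →₀ ℕ | term m ν ≠ 0} =
      ⋃ n : ℕ, {ν | term m ν ≠ 0 ∧ lev (0 : V) (wsum ν) ≤ n} := by
    ext ν
    simp only [Set.mem_setOf_eq, Set.mem_iUnion]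
    constructor
    · intro h
      obtain ⟨n, hn⟩ := exists_nat_ge (lev (0 : V) (wsum ν))
      exact ⟨n, h, hn⟩
    · rintro ⟨n, h, _⟩; exact h
  apply Set.Countable.image
  rw [this]
  exact Set.countable_iUnion (fun n => (finite_level hh _).countable)

/-- Existence of a generic level functional vanishing on `a` and on no relevant
vector outside `ℝa`. -/
lemma exists_generic [FiniteDimensional ℝ V] (a : ℝ × V) (ha : a.2 ≠ 0)
    (D : Set (ℝ × V)) (hD : D.Countable) :
    ∃ w : V, lev w a = 0 ∧ ∀ x ∈ D, lev w x = 0 → ∃ t : ℝ, x = t • a := by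
  classical
  have hna : (0 : ℝ) < ‖a.2‖ ^ 2 := by
    have := norm_pos_iff.mpr ha
    positivity
  set w₀ : V := (-(a.1 / ‖a.2‖ ^ 2)) • a.2 with hw₀
  set K : Submodule ℝ V := (ℝ ∙ a.2)ᗮ with hK
  have hinner_w₀ : ∀ t : ℝ, ⟪(t • a.2 : V), w₀⟫ = -(t * a.1) := by
    intro t
    rw [hw₀, real_inner_smul_left, real_inner_smul_right, real_inner_self_eq_norm_sq]
    field_simp
  have hinner_K : ∀ (u : V), ∀ k : K, u ∈ (ℝ ∙ a.2) → ⟪u, (k : V)⟫ = 0 := by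
    intro u k hu
    exact (Submodule.mem_orthogonal _ _).1 k.2 u hu
  have hconst : ∀ (x : ℝ × V) (t : ℝ), x.2 = t • a.2 → ∀ k : K,
      lev (w₀ + (k : V)) x = x.1 - t * a.1 := by
    intro x t hx k
    rw [lev, hx, inner_add_right, hinner_w₀, real_inner_smul_left,
      hinner_K _ k (Submodule.mem_span_singleton.2 ⟨1, one_smul _ _⟩)]
    ring
  set Dbad : Set (ℝ × V) :=
    {x ∈ D | ((K.orthogonalProjectionOnto x.2 : V) ≠ 0)} with hDbad
  have hDbadc : Dbad.Countable := hD.mono (Set.sep_subset _ _)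
  haveI := hDbadc.to_subtype
  set U : Dbad → Set K := fun x => {k : K | x.1.1 + ⟪x.1.2, w₀ + (k : V)⟫ ≠ 0} with hU
  have hopen : ∀ x, IsOpen (U x) := by
    intro x
    have hcont : Continuous fun k : K => x.1.1 + ⟪x.1.2, w₀ + (k : V)⟫ :=
      Continuous.add continuous_const (Continuous.inner continuous_const
        (Continuous.add continuous_const continuous_subtype_val))
    exact IsOpen.preimage hcont isOpen_compl_singleton
  have hdense : ∀ x, Dense (U x) := by
    intro x
    intro k₀
    by_cases hk₀ : k₀ ∈ U x
    · exact subset_closure hk₀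
    · simp only [hU, Set.mem_setOf_eq, not_not] at hk₀
      rw [Metric.mem_closure_iff]
      intro ε hε
      set px : K := K.orthogonalProjectionOnto x.1.2 with hpx
      have hpxne : (px : V) ≠ 0 := x.2.2
      have hpxnorm : (0:ℝ) < ‖(px : V)‖ := by
        rw [norm_pos_iff]; exact hpxne
      have hipx : ⟪x.1.2, (px : V)⟫ = ‖(px : V)‖ ^ 2 := by
        have horth := Submodule.sub_starProjection_mem_orthogonal (K := K) x.1.2
        rw [Submodule.mem_orthogonal] at horth
        have h1 : ⟪(px : V), x.1.2 - (px : V)⟫ = 0 := horth _ px.2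
        have h2 : ⟪(px : V), x.1.2⟫ - ⟪(px : V), (px : V)⟫ = 0 := by
          rw [← inner_sub_right]; exact h1
        rw [real_inner_comm, ← real_inner_self_eq_norm_sq]
        linarith
      set δ : ℝ := ε / (2 * (‖(px : V)‖ + 1)) with hδ
      have hδpos : 0 < δ := by
        apply div_pos hε
        positivity
      refine ⟨k₀ + δ • px, ?_, ?_⟩
      · simp only [hU, Set.mem_setOf_eq]
        rw [Submodule.coe_add, Submodule.coe_smul, ← add_assoc, inner_add_right,
          real_inner_smul_right, hipx]
        have hpos : 0 < δ * ‖(px : V)‖ ^ 2 := mul_pos hδpos (pow_pos hpxnorm 2)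
        intro hcontra
        linarith [hk₀, hpos]
      · rw [dist_eq_norm]
        have h1 : k₀ - (k₀ + δ • px) = -(δ • px) := by abel
        rw [h1, norm_neg, norm_smul, Real.norm_eq_abs, abs_of_pos hδpos]
        have hc : ‖px‖ = ‖(px : V)‖ := rfl
        rw [hδ, hc, div_mul_eq_mul_div, div_lt_iff₀ (by positivity)]
        nlinarith [hpxnorm, hε]
  have hnonempty : (⋂ x, U x).Nonempty :=
    (dense_iInter_of_isOpen hopen hdense).nonempty
  obtain ⟨kstar, hkstar⟩ := hnonempty
  refine ⟨w₀ + (kstar : V), ?_, ?_⟩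
  · have := hconst a 1 (one_smul _ _).symm kstar
    rw [this]; ring
  · intro x hxD hlev
    by_cases hproj : (K.orthogonalProjectionOnto x.2 : V) = 0
    · have hx2 : x.2 ∈ (ℝ ∙ a.2) := by
        have h1 : x.2 ∈ Kᗮ := Submodule.orthogonalProjectionOnto_eq_zero_iff.1 (by
          exact_mod_cast Subtype.ext_iff.2 hproj)
        rwa [hK, Submodule.orthogonal_orthogonal] at h1
      obtain ⟨t, ht⟩ := Submodule.mem_span_singleton.1 hx2
      refine ⟨t, ?_⟩
      have := hconst x t ht.symm kstar
      rw [hlev] at this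
      have hx1 : x.1 = t * a.1 := by linarith
      ext
      · rw [hx1]; simp
      · rw [← ht]; simp
    · have hxbad : x ∈ Dbad := ⟨hxD, hproj⟩
      have := Set.mem_iInter.1 hkstar ⟨x, hxbad⟩
      simp only [hU, Set.mem_setOf_eq] at this
      exact (this hlev).elim

lemma para_expand (c : ℝ × V) (r : ℝ) (μ aa : ℝ × V) (u : ℝ) :
    ((μ + u • aa - c).1 = r * ‖(μ + u • aa - c).2‖ ^ 2) ↔
    ((μ - c).1 + u * aa.1 =
      r * (‖(μ - c).2‖ ^ 2 + 2 * u * ⟪(μ - c).2, aa.2⟫ + u ^ 2 * ‖aa.2‖ ^ 2)) := by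
  have h1 : (μ + u • aa - c).1 = (μ - c).1 + u * aa.1 := by
    simp only [Prod.fst_sub, Prod.fst_add, Prod.smul_fst, smul_eq_mul]
    ring
  have h2 : (μ + u • aa - c).2 = (μ - c).2 + u • aa.2 := by
    simp only [Prod.snd_sub, Prod.snd_add, Prod.smul_snd]
    abel
  rw [h1, h2, norm_add_sq_real, real_inner_smul_right, norm_smul, Real.norm_eq_abs,
    mul_pow, sq_abs]
  constructor <;> intro h <;> linarith [h]

lemma quad_two {c : ℝ × V} {r : ℝ} (hr : 0 < r) {aa : ℝ × V} (haa : aa.2 ≠ 0) (μ : ℝ × V)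
    {u₁ u₂ u₃ : ℝ}
    (h1 : (μ + u₁ • aa - c).1 = r * ‖(μ + u₁ • aa - c).2‖ ^ 2)
    (h2 : (μ + u₂ • aa - c).1 = r * ‖(μ + u₂ • aa - c).2‖ ^ 2)
    (h3 : (μ + u₃ • aa - c).1 = r * ‖(μ + u₃ • aa - c).2‖ ^ 2) :
    u₁ = u₂ ∨ u₁ = u₃ ∨ u₂ = u₃ := by
  by_contra hcon
  push_neg at hcon
  obtain ⟨n12, n13, n23⟩ := hcon
  rw [para_expand] at h1 h2 h3
  have hna : (0 : ℝ) < ‖aa.2‖ ^ 2 := by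
    have := norm_pos_iff.mpr haa
    positivity
  have k12 : aa.1 = r * (2 * ⟪(μ - c).2, aa.2⟫) + (u₁ + u₂) * (r * ‖aa.2‖ ^ 2) := by
    apply mul_left_cancel₀ (sub_ne_zero.mpr n12)
    linear_combination h1 - h2
  have k13 : aa.1 = r * (2 * ⟪(μ - c).2, aa.2⟫) + (u₁ + u₃) * (r * ‖aa.2‖ ^ 2) := by
    apply mul_left_cancel₀ (sub_ne_zero.mpr n13)
    linear_combination h1 - h3
  have : (u₂ - u₃) * (r * ‖aa.2‖ ^ 2) = 0 := by linarith
  rcases mul_eq_zero.1 this with h | h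
  · exact n23 (by linarith)
  · nlinarith

lemma telescope (e : ℝ → ℤ) (hfin : (support e).Finite) (hne : (support e).Nonempty)
    (c : ℝ → ℤ) (hc : ∀ u, c u = e u - e (u - 1))
    (h2 : ∀ u₁ u₂ u₃ : ℝ, c u₁ ≠ 0 → c u₂ ≠ 0 → c u₃ ≠ 0 → u₁ = u₂ ∨ u₁ = u₃ ∨ u₂ = u₃) :
    ∃ u₀ : ℝ, ∃ d : ℕ, 0 < d ∧ ∀ u, c u ≠ 0 ↔ (u = u₀ ∨ u = u₀ + d) := by
  classical
  set E := hfin.toFinset with hE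
  have hEne : E.Nonempty := by
    obtain ⟨u, hu⟩ := hne
    exact ⟨u, hfin.mem_toFinset.2 hu⟩
  have hmemE : ∀ u, u ∈ E ↔ e u ≠ 0 := fun u => hfin.mem_toFinset
  set umin := E.min' hEne with humin
  set umax := E.max' hEne with humax
  have hminmax : umin ≤ umax := E.min'_le _ (E.max'_mem hEne)
  have hcmin : c umin ≠ 0 := by
    rw [hc]
    have h0 : e (umin - 1) = 0 := by
      by_contra hz
      have := E.min'_le _ ((hmemE _).2 hz)
      linarith
    rw [h0, sub_zero]
    exact (hmemE _).1 (E.min'_mem hEne)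
  have hcmaxp : c (umax + 1) ≠ 0 := by
    rw [hc]
    have h0 : e (umax + 1) = 0 := by
      by_contra hz
      have := E.le_max' _ ((hmemE _).2 hz)
      linarith
    have h1 : umax + 1 - 1 = umax := by ring
    rw [h0, h1, zero_sub, neg_ne_zero]
    exact (hmemE _).1 (E.max'_mem hEne)
  -- the chain of integer steps from umin
  have hKfin : {k : ℕ | umin + (k : ℝ) ∈ E}.Finite := by
    apply Set.Finite.preimage _ E.finite_toSet
    intro k₁ _ k₂ _ h
    have : ((k₁ : ℝ)) = (k₂ : ℝ) := by
      simpa using h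
    exact_mod_cast this
  have hKne : {k : ℕ | umin + (k : ℝ) ∈ E}.Nonempty :=
    ⟨0, by simpa using E.min'_mem hEne⟩
  set Kf := hKfin.toFinset with hKf
  have hKfne : Kf.Nonempty := by
    obtain ⟨k, hk⟩ := hKne
    exact ⟨k, hKfin.mem_toFinset.2 hk⟩
  set kstar := Kf.max' hKfne with hkstar
  have hkstarE : umin + (kstar : ℝ) ∈ E := hKfin.mem_toFinset.1 (Kf.max'_mem hKfne)
  have hnot : umin + ((kstar + 1 : ℕ) : ℝ) ∉ E := by
    intro hmem
    have : (kstar + 1) ∈ Kf := hKfin.mem_toFinset.2 hmem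
    have := Kf.le_max' _ this
    omega
  have hcstar : c (umin + (kstar : ℝ) + 1) ≠ 0 := by
    rw [hc]
    have h0 : e (umin + (kstar : ℝ) + 1) = 0 := by
      by_contra hz
      apply hnot
      rw [hmemE]
      convert hz using 2
      push_cast
      ring
    have h1 : umin + (kstar : ℝ) + 1 - 1 = umin + (kstar : ℝ) := by ring
    rw [h0, h1, zero_sub, neg_ne_zero]
    exact (hmemE _).1 hkstarE
  -- identify: umax = umin + kstar
  have hid : umax + 1 = umin + (kstar : ℝ) + 1 := by
    rcases h2 _ _ _ hcmin hcmaxp hcstar with h | h | h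
    · linarith
    · exfalso
      have : (0 : ℝ) ≤ (kstar : ℝ) := Nat.cast_nonneg _
      linarith
    · exact h
  refine ⟨umin, kstar + 1, Nat.succ_pos _, ?_⟩
  intro u
  constructor
  · intro hu
    rcases h2 u umin (umax + 1) hu hcmin hcmaxp with h | h | h
    · exact Or.inl h
    · right
      rw [h, hid]
      push_cast
      ring
    · exfalso
      have := hminmax
      linarith
  · intro hu
    rcases hu with h | h
    · rw [h]; exact hcmin
    · rw [h]
      have : umin + ((kstar + 1 : ℕ) : ℝ) = umax + 1 := by
        rw [hid]; push_cast; ring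
      rw [this]
      exact hcmaxp

/-! ### ratio and level-set machinery -/

noncomputable def ratio (a x : ℝ × V) : ℝ := ⟪x.2, a.2⟫ / ‖a.2‖ ^ 2

lemma ratio_add (a x y : ℝ × V) : ratio a (x + y) = ratio a x + ratio a y := by
  simp only [ratio, Prod.snd_add, inner_add_left]
  ring

lemma ratio_smul (a : ℝ × V) (t : ℝ) (x : ℝ × V) : ratio a (t • x) = t * ratio a x := by
  simp only [ratio, Prod.smul_snd, real_inner_smul_left]
  ring

lemma ratio_nsmul (a : ℝ × V) (k : ℕ) (x : ℝ × V) : ratio a (k • x) = k * ratio a x := by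
  rw [← Nat.cast_smul_eq_nsmul ℝ, ratio_smul]

lemma ratio_of_smul {a : ℝ × V} (ha : a.2 ≠ 0) (t : ℝ) : ratio a (t • a) = t := by
  have hna : ‖a.2‖ ^ 2 ≠ 0 := by
    have := norm_pos_iff.mpr ha
    positivity
  rw [ratio, Prod.smul_snd, real_inner_smul_left, real_inner_self_eq_norm_sq]
  field_simp

/-- The set of admissible `ν` at level exactly `ℓ`. -/
def SetAf (m : ℝ × V → ℕ) (w : V) (ℓ : ℝ) : Set ((ℝ × V) →₀ ℕ) :=
  {ν | term m ν ≠ 0 ∧ lev w (wsum ν) = ℓ}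

lemma SetAf_finite {m : ℝ × V → ℕ} {w : V}
    (hh : ∀ C : ℝ, {s ∈ support m | lev w s ≤ C}.Finite) (ℓ : ℝ) :
    (SetAf m w ℓ).Finite :=
  (finite_level hh ℓ).subset (fun ν h => ⟨h.1, le_of_eq h.2⟩)

lemma alt_choose_zero {n : ℕ} (hn : n ≠ 0) :
    ∑ k ∈ Finset.range (n + 1), (-1 : ℤ) ^ k * (n.choose k : ℤ) = 0 := by
  rw [Int.alternating_sum_range_choose]
  simp [hn]

lemma alt_choose_mul_zero {n : ℕ} (hn : 2 ≤ n) :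
    ∑ k ∈ Finset.range (n + 1), (-1 : ℤ) ^ k * (k : ℤ) * (n.choose k : ℤ) = 0 := by
  obtain ⟨p, rfl⟩ : ∃ p, n = p + 1 := ⟨n - 1, by omega⟩
  rw [Finset.sum_range_succ']
  have hstep : ∀ i : ℕ, (-1 : ℤ) ^ (i + 1) * ((i + 1 : ℕ) : ℤ) * ((p + 1).choose (i + 1) : ℤ)
      = -((p + 1 : ℕ) : ℤ) * ((-1 : ℤ) ^ i * (p.choose i : ℤ)) := by
    intro i
    have h1 : (p + 1) * p.choose i = (p + 1).choose (i + 1) * (i + 1) := by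
      exact_mod_cast Nat.add_one_mul_choose_eq p i
    have h2 : ((p + 1 : ℕ) : ℤ) * (p.choose i : ℤ) = ((p + 1).choose (i + 1) : ℤ) * ((i + 1 : ℕ) : ℤ) := by
      exact_mod_cast congrArg (Nat.cast : ℕ → ℤ) h1
    rw [pow_succ]
    push_cast at h2 ⊢
    linear_combination ((-1 : ℤ) ^ i) * h2
  rw [Finset.sum_congr rfl (fun i _ => hstep i)]
  rw [← Finset.mul_sum]
  have hp : p ≠ 0 := by omega
  rw [alt_choose_zero hp]
  simp

variable [DecidableEq (ℝ × V)]

/-- Reindexing a sum over admissible `ν` with prescribed zero values by splitting off the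
`sstar`-component. -/
lemma fiber_reindex {α : Type*} [AddCommMonoid α] {m : ℝ × V → ℕ} {w : V} {ℓ : ℝ}
    (hA : (SetAf m w ℓ).Finite) (X : Finset (ℝ × V)) {sstar : ℝ × V}
    (hsX : sstar ∉ X) (hlev : lev w sstar = 0) (g : ((ℝ × V) →₀ ℕ) → α) :
    ∑ ν ∈ hA.toFinset.filter (fun ν => ∀ s ∈ X, ν s = 0), g ν
    = ∑ k ∈ Finset.range (m sstar + 1),
        ∑ ν ∈ hA.toFinset.filter (fun ν => ∀ s ∈ insert sstar X, ν s = 0),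
          g (ν + Finsupp.single sstar k) := by
  classical
  have hmem : ∀ ν, ν ∈ hA.toFinset ↔ term m ν ≠ 0 ∧ lev w (wsum ν) = ℓ := by
    intro ν
    rw [Set.Finite.mem_toFinset]
    exact Iff.rfl
  rw [← Finset.sum_fiberwise_of_maps_to (t := Finset.range (m sstar + 1))
    (g := fun ν => ν sstar) ?hmap g]
  case hmap =>
    intro ν hν
    rw [Finset.mem_filter] at hν
    rw [Finset.mem_range]
    have := term_le ((hmem ν).1 hν.1).1 sstar
    show ν sstar < m sstar + 1
    omega
  apply Finset.sum_congr rfl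
  intro k hk
  rw [Finset.mem_range] at hk
  have hkle : k ≤ m sstar := by omega
  apply Finset.sum_nbij' (i := Finsupp.erase sstar) (j := fun ν => ν + Finsupp.single sstar k)
  · -- forward membership
    intro ν hν
    rw [Finset.mem_filter, Finset.mem_filter] at hν
    obtain ⟨⟨hνA, hνX⟩, hν3⟩ := hν
    have hν3' : ν sstar = k := hν3
    rw [hmem] at hνA
    have hrecon : Finsupp.erase sstar ν + Finsupp.single sstar k = ν := by
      conv_rhs => rw [← Finsupp.erase_add_single sstar ν]
      rw [hν3']
    have hdisj : Disjoint (Finsupp.erase sstar ν).support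
        (Finsupp.single sstar k).support := by
      rw [Finset.disjoint_left]
      intro x hx hx2
      have hxne : x ≠ sstar := by
        rw [Finsupp.support_erase] at hx
        exact Finset.ne_of_mem_erase hx
      exact hxne (Finset.mem_singleton.1 (Finsupp.support_single_subset hx2))
    have hterm : term m ν = term m (Finsupp.erase sstar ν) * term m (Finsupp.single sstar k) := by
      conv_lhs => rw [← hrecon]
      exact term_mul_of_disjoint hdisj
    have hwsum : wsum ν = wsum (Finsupp.erase sstar ν) + k • sstar := by
      conv_lhs => rw [← hrecon]
      rw [wsum_add, wsum_single]
    rw [Finset.mem_filter]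
    constructor
    · rw [hmem]
      constructor
      · exact left_ne_zero_of_mul (hterm ▸ hνA.1)
      · have : lev w (wsum ν) = lev w (wsum (Finsupp.erase sstar ν)) := by
          rw [hwsum, lev_add, lev_nsmul, hlev]
          ring
        rw [← this, hνA.2]
    · intro s hs
      rcases Finset.mem_insert.1 hs with h | h
      · rw [h]; exact Finsupp.erase_same
      · rw [Finsupp.erase_ne (by rintro rfl; exact hsX h)]
        exact hνX s h
  · -- backward membership
    intro ν hν
    rw [Finset.mem_filter] at hν
    obtain ⟨hνA, hνX⟩ := hν
    rw [hmem] at hνA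
    have hνs : ν sstar = 0 := hνX sstar (Finset.mem_insert_self _ _)
    have hdisj : Disjoint ν.support (Finsupp.single sstar k).support := by
      rw [Finset.disjoint_left]
      intro x hx hx2
      have : x = sstar := Finset.mem_singleton.1 (Finsupp.support_single_subset hx2)
      rw [this, Finsupp.mem_support_iff] at hx
      exact hx hνs
    have hterm := term_mul_of_disjoint (m := m) hdisj
    have hsig : term m (Finsupp.single sstar k) ≠ 0 := by
      rw [term_single]
      apply mul_ne_zero (pow_ne_zero _ (by norm_num))
      exact_mod_cast (Nat.choose_pos hkle).ne'
    rw [Finset.mem_filter, Finset.mem_filter]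
    refine ⟨⟨?_, ?_⟩, ?_⟩
    · rw [hmem]
      refine ⟨by rw [hterm]; exact mul_ne_zero hνA.1 hsig, ?_⟩
      rw [wsum_add, wsum_single, lev_add, lev_nsmul, hlev, hνA.2]
      ring
    · intro s hs
      rw [Finsupp.add_apply, hνX s (Finset.mem_insert_of_mem hs),
        Finsupp.single_apply_eq_zero.2 (by rintro rfl; exact absurd hs hsX), add_zero]
    · show (ν + Finsupp.single sstar k) sstar = k
      rw [Finsupp.add_apply, hνs, Finsupp.single_eq_same, zero_add]
  · -- left inverse
    intro ν hν
    rw [Finset.mem_filter] at hν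
    have hk' : ν sstar = k := hν.2
    conv_rhs => rw [← Finsupp.erase_add_single sstar ν]
    rw [hk']
  · -- right inverse
    intro ν hν
    rw [Finset.mem_filter] at hν
    have hνs : ν sstar = 0 := hν.2 sstar (Finset.mem_insert_self _ _)
    rw [Finsupp.erase_add, Finsupp.erase_single]
    have : Finsupp.erase sstar ν = ν := by
      ext s
      by_cases hs : s = sstar
      · rw [hs, Finsupp.erase_same, hνs]
      · rw [Finsupp.erase_ne hs]
    rw [this, add_zero]
  · -- function values
    intro ν hν
    rw [Finset.mem_filter] at hν
    have hk' : ν sstar = k := hν.2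
    congr 1
    conv_lhs => rw [← Finsupp.erase_add_single sstar ν]
    rw [hk']

lemma term_add_single {m : ℝ × V → ℕ} {ν : (ℝ × V) →₀ ℕ} {sstar : ℝ × V} (k : ℕ)
    (hν : ν sstar = 0) :
    term m (ν + Finsupp.single sstar k)
      = ((-1 : ℤ) ^ k * ((m sstar).choose k : ℤ)) * term m ν := by
  classical
  have hdisj : Disjoint ν.support (Finsupp.single sstar k).support := by
    rw [Finset.disjoint_left]
    intro x hx hx2
    have : x = sstar := Finset.mem_singleton.1 (Finsupp.support_single_subset hx2)
    rw [this, Finsupp.mem_support_iff] at hx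
    exact hx hν
  rw [term_mul_of_disjoint hdisj, term_single, mul_comm]

lemma ev_split {m : ℝ × V → ℕ} {w : V} {ℓ : ℝ}
    (hA : (SetAf m w ℓ).Finite) (X : Finset (ℝ × V)) {sstar : ℝ × V}
    (hsX : sstar ∉ X) (hlev : lev w sstar = 0) :
    ∑ ν ∈ hA.toFinset.filter (fun ν => ∀ s ∈ X, ν s = 0), term m ν
    = (∑ k ∈ Finset.range (m sstar + 1), (-1 : ℤ) ^ k * ((m sstar).choose k : ℤ)) *
      ∑ ν ∈ hA.toFinset.filter (fun ν => ∀ s ∈ insert sstar X, ν s = 0), term m ν := by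
  rw [fiber_reindex hA X hsX hlev (term m), Finset.sum_mul]
  apply Finset.sum_congr rfl
  intro k _
  rw [Finset.mul_sum]
  apply Finset.sum_congr rfl
  intro ν hν
  rw [Finset.mem_filter] at hν
  exact term_add_single k (hν.2 sstar (Finset.mem_insert_self _ _))

lemma ev_zero {m : ℝ × V → ℕ} {w : V} {ℓ : ℝ}
    (hA : (SetAf m w ℓ).Finite) (X : Finset (ℝ × V)) {sstar : ℝ × V}
    (hsX : sstar ∉ X) (hsS : sstar ∈ support m) (hlev : lev w sstar = 0) :
    ∑ ν ∈ hA.toFinset.filter (fun ν => ∀ s ∈ X, ν s = 0), term m ν = 0 := by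
  rw [ev_split hA X hsX hlev, alt_choose_zero (mem_support.1 hsS), zero_mul]

lemma l1_core {m : ℝ × V → ℕ} {w : V} {ℓ : ℝ}
    (hA : (SetAf m w ℓ).Finite) (X : Finset (ℝ × V)) {sstar : ℝ × V}
    (hsX : sstar ∉ X) (hlev : lev w sstar = 0) (a lam : ℝ × V) :
    ∑ ν ∈ hA.toFinset.filter (fun ν => ∀ s ∈ X, ν s = 0),
        (term m ν : ℝ) * ratio a (wsum ν - lam)
    = ((∑ k ∈ Finset.range (m sstar + 1), (-1 : ℤ) ^ k * ((m sstar).choose k : ℤ) : ℤ) : ℝ) *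
        (∑ ν ∈ hA.toFinset.filter (fun ν => ∀ s ∈ insert sstar X, ν s = 0),
          (term m ν : ℝ) * ratio a (wsum ν - lam))
      + ((∑ k ∈ Finset.range (m sstar + 1),
            (-1 : ℤ) ^ k * (k : ℤ) * ((m sstar).choose k : ℤ) : ℤ) : ℝ) * ratio a sstar *
        ((∑ ν ∈ hA.toFinset.filter (fun ν => ∀ s ∈ insert sstar X, ν s = 0), term m ν : ℤ) : ℝ) := by
  rw [fiber_reindex hA X hsX hlev (fun ν => (term m ν : ℝ) * ratio a (wsum ν - lam))]
  have hpt : ∀ k : ℕ, ∀ ν ∈ hA.toFinset.filter (fun ν => ∀ s ∈ insert sstar X, ν s = 0),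
      (term m (ν + Finsupp.single sstar k) : ℝ) *
          ratio a (wsum (ν + Finsupp.single sstar k) - lam)
      = (((-1 : ℤ) ^ k * ((m sstar).choose k : ℤ) : ℤ) : ℝ) *
            ((term m ν : ℝ) * ratio a (wsum ν - lam))
        + (((-1 : ℤ) ^ k * ((m sstar).choose k : ℤ) : ℤ) : ℝ) * (k : ℝ) * ratio a sstar *
            (term m ν : ℝ) := by
    intro k ν hν
    rw [Finset.mem_filter] at hν
    have h0 : ν sstar = 0 := hν.2 sstar (Finset.mem_insert_self _ _)
    have hts : term m (ν + Finsupp.single sstar k)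
        = ((-1 : ℤ) ^ k * ((m sstar).choose k : ℤ)) * term m ν := term_add_single k h0
    have hrs : ratio a (wsum (ν + Finsupp.single sstar k) - lam)
        = ratio a (wsum ν - lam) + (k : ℝ) * ratio a sstar := by
      have : wsum (ν + Finsupp.single sstar k) - lam = (wsum ν - lam) + k • sstar := by
        rw [wsum_add, wsum_single]
        abel
      rw [this, ratio_add, ratio_nsmul]
    rw [hts, hrs]
    push_cast
    ring
  calc ∑ k ∈ Finset.range (m sstar + 1),
        ∑ ν ∈ hA.toFinset.filter (fun ν => ∀ s ∈ insert sstar X, ν s = 0),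
          (term m (ν + Finsupp.single sstar k) : ℝ) *
            ratio a (wsum (ν + Finsupp.single sstar k) - lam)
      = ∑ k ∈ Finset.range (m sstar + 1),
          ((((-1 : ℤ) ^ k * ((m sstar).choose k : ℤ) : ℤ) : ℝ) *
            (∑ ν ∈ hA.toFinset.filter (fun ν => ∀ s ∈ insert sstar X, ν s = 0),
              (term m ν : ℝ) * ratio a (wsum ν - lam))
          + (((-1 : ℤ) ^ k * ((m sstar).choose k : ℤ) : ℤ) : ℝ) * (k : ℝ) * ratio a sstar *
            ((∑ ν ∈ hA.toFinset.filter (fun ν => ∀ s ∈ insert sstar X, ν s = 0),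
              term m ν : ℤ) : ℝ)) := by
        apply Finset.sum_congr rfl
        intro k hk
        rw [Finset.sum_congr rfl (hpt k), Finset.sum_add_distrib, ← Finset.mul_sum]
        congr 1
        rw [← Finset.mul_sum]
        push_cast
        ring
    _ = _ := by
        rw [Finset.sum_add_distrib, ← Finset.sum_mul, ← Finset.sum_mul]
        congr 1
        · push_cast
          ring
        · push_cast
          rw [Finset.sum_mul, Finset.sum_mul, Finset.sum_mul]
          apply Finset.sum_congr rfl
          intro k _
          ring

/-! ### canonical extremal Finsupps -/

noncomputable def nuG (m : ℝ × V → ℕ) (G : Finset (ℝ × V)) : (ℝ × V) →₀ ℕ :=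
  ∑ s ∈ G, Finsupp.single s (m s)

lemma nuG_apply (m : ℝ × V → ℕ) (G : Finset (ℝ × V)) (v : ℝ × V) :
    nuG m G v = if v ∈ G then m v else 0 := by
  classical
  rw [nuG, Finsupp.finset_sum_apply,
    Finset.sum_congr rfl (fun s _ => Finsupp.single_apply), Finset.sum_ite_eq' G v m]

lemma nuG_supp {m : ℝ × V → ℕ} {G : Finset (ℝ × V)} (hG : ∀ s ∈ G, s ∈ support m) :
    (nuG m G).support = G := by
  classical
  ext v
  rw [Finsupp.mem_support_iff, nuG_apply]
  by_cases hv : v ∈ G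
  · simp only [hv, if_true, iff_true]
    exact mem_support.1 (hG v hv)
  · simp [hv]

lemma nuG_term {m : ℝ × V → ℕ} {G : Finset (ℝ × V)} (hG : ∀ s ∈ G, s ∈ support m) :
    term m (nuG m G) ≠ 0 := by
  classical
  rw [term, Finset.prod_ne_zero_iff]
  intro v hv
  rw [nuG_supp hG] at hv
  rw [nuG_apply, if_pos hv, Nat.choose_self]
  simp

lemma nuG_wsum (m : ℝ × V → ℕ) (G : Finset (ℝ × V)) :
    wsum (nuG m G) = ∑ s ∈ G, (m s) • s := by
  classical
  have : wsum (nuG m G) = ∑ s ∈ G, wsum (Finsupp.single s (m s)) := by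
    rw [nuG]
    exact map_sum (AddMonoidHom.mk' wsum wsum_add) _ _
  rw [this, Finset.sum_congr rfl (fun s _ => wsum_single s (m s))]

lemma lvl_filter_S0 {w : V} {S0 : Finset (ℝ × V)}
    (hS0lev : ∀ s ∈ S0, lev w s = 0) (ν : (ℝ × V) →₀ ℕ) :
    lev w (wsum (ν.filter (· ∈ S0))) = 0 := by
  classical
  rw [lvl_eq_sum]
  apply Finset.sum_eq_zero
  intro v hv
  rw [Finsupp.support_filter, Finset.mem_filter] at hv
  rw [hS0lev v hv.2, mul_zero]

lemma wsum_filter_S0 {a : ℝ × V} {S0 : Finset (ℝ × V)}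
    (hS0r : ∀ s ∈ S0, s = ratio a s • a) (ν : (ℝ × V) →₀ ℕ) :
    wsum (ν.filter (· ∈ S0))
      = (∑ v ∈ (ν.filter (· ∈ S0)).support, ((ν.filter (· ∈ S0)) v : ℝ) * ratio a v) • a := by
  classical
  rw [wsum, Finsupp.sum, Finset.sum_smul]
  apply Finset.sum_congr rfl
  intro v hv
  have hvS0 : v ∈ S0 := by
    rw [Finsupp.support_filter, Finset.mem_filter] at hv
    exact hv.2
  calc (ν.filter (· ∈ S0)) v • v = (ν.filter (· ∈ S0)) v • (ratio a v • a) := by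
        rw [← hS0r v hvS0]
    _ = (((ν.filter (· ∈ S0)) v : ℝ) * ratio a v) • a := by
        rw [← Nat.cast_smul_eq_nsmul ℝ, smul_smul]

/-- Uniqueness of the admissible `ν` of minimal level vanishing on the `a`-line. -/
lemma min_unique {m : ℝ × V → ℕ} {w : V} {a : ℝ × V} {S0 Nf : Finset (ℝ × V)}
    (hS0mem : ∀ s, s ∈ S0 ↔ s ∈ support m ∧ ∃ t : ℝ, s = t • a)
    (hNfmem : ∀ s, s ∈ Nf ↔ s ∈ support m ∧ lev w s < 0)
    (hgen0 : ∀ v ∈ support m, lev w v = 0 → ∃ t : ℝ, v = t • a)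
    (ν : (ℝ × V) →₀ ℕ) (hterm : term m ν ≠ 0)
    (hlvl : lev w (wsum ν) = lev w (wsum (nuG m Nf)))
    (hS0zero : ∀ s ∈ S0, ν s = 0) :
    ν = nuG m Nf := by
  classical
  have hNS : ∀ s ∈ Nf, s ∈ support m := fun s hs => ((hNfmem s).1 hs).1
  set U := ν.support ∪ Nf with hU
  set f : (ℝ × V) → ℝ :=
    fun v => ((ν v : ℝ) - (if v ∈ Nf then (m v : ℝ) else 0)) * lev w v with hf
  have hlhs : ∑ v ∈ U, (ν v : ℝ) * lev w v = lev w (wsum ν) := by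
    rw [lvl_eq_sum]
    exact (Finset.sum_subset Finset.subset_union_left (fun v _ hv => by
      rw [Finsupp.notMem_support_iff.1 hv]; simp)).symm
  have hrhs : ∑ v ∈ U, (if v ∈ Nf then (m v : ℝ) else 0) * lev w v
      = lev w (wsum (nuG m Nf)) := by
    rw [lvl_eq_sum, nuG_supp hNS]
    rw [← Finset.sum_subset Finset.subset_union_right
      (fun v _ hv => by rw [if_neg hv, zero_mul])]
    apply Finset.sum_congr rfl
    intro v hv
    rw [if_pos hv, nuG_apply, if_pos hv]
  have hsum0 : ∑ v ∈ U, f v = 0 := by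
    rw [hf]
    simp only [sub_mul]
    rw [Finset.sum_sub_distrib, hlhs, hrhs, hlvl, sub_self]
  have hpos : ∀ v ∈ U, ¬ v ∈ Nf → v ∈ ν.support → 0 < lev w v := by
    intro v _ hvN hvs
    have hvS : v ∈ support m := term_supp hterm (Finsupp.mem_support_iff.1 hvs)
    have h1 : ¬ lev w v < 0 := fun hc => hvN ((hNfmem v).2 ⟨hvS, hc⟩)
    rcases lt_or_eq_of_le (not_lt.1 h1) with h | h
    · exact h
    · exfalso
      obtain ⟨t, ht⟩ := hgen0 v hvS h.symm
      have : v ∈ S0 := (hS0mem v).2 ⟨hvS, t, ht⟩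
      exact Finsupp.mem_support_iff.1 hvs (hS0zero v this)
  have hnonneg : ∀ v ∈ U, 0 ≤ f v := by
    intro v hv
    show 0 ≤ ((ν v : ℝ) - if v ∈ Nf then (m v : ℝ) else 0) * lev w v
    by_cases hvN : v ∈ Nf
    · rw [if_pos hvN]
      have h1 : lev w v < 0 := ((hNfmem v).1 hvN).2
      have h2 : (ν v : ℝ) ≤ (m v : ℝ) := by exact_mod_cast term_le hterm v
      nlinarith
    · rw [if_neg hvN]
      by_cases hvs : v ∈ ν.support
      · have := hpos v hv hvN hvs
        have h2 : (0 : ℝ) ≤ (ν v : ℝ) := Nat.cast_nonneg _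
        nlinarith
      · rw [Finsupp.notMem_support_iff.1 hvs]
        simp
  have hzero : ∀ v ∈ U, f v = 0 :=
    (Finset.sum_eq_zero_iff_of_nonneg hnonneg).1 hsum0
  ext v
  rw [nuG_apply]
  by_cases hvN : v ∈ Nf
  · rw [if_pos hvN]
    have h1 := hzero v (Finset.mem_union_right _ hvN)
    simp only [hf, if_pos hvN] at h1
    have h2 : lev w v ≠ 0 := ne_of_lt ((hNfmem v).1 hvN).2
    rcases mul_eq_zero.1 h1 with h | h
    · have : (ν v : ℝ) = (m v : ℝ) := by linarith [sub_eq_zero.1 h]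
      exact_mod_cast this
    · exact absurd h h2
  · rw [if_neg hvN]
    by_cases hvs : v ∈ ν.support
    · exfalso
      have h1 := hzero v (Finset.mem_union_left _ hvs)
      simp only [hf, if_neg hvN, sub_zero] at h1
      have h2 := hpos v (Finset.mem_union_left _ hvs) hvN hvs
      rcases mul_eq_zero.1 h1 with h | h
      · exact Finsupp.mem_support_iff.1 hvs (by exact_mod_cast h)
      · linarith
    · exact Finsupp.notMem_support_iff.1 hvs

/-- Main structural lemma: on the line `ℝa` the support of `m` consists of `a` alone with
multiplicity one, and the two extreme points of the bottom line slice are in `Λ(m)`. -/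
lemma bottom {m : ℝ × V → ℕ} {w : V} {a : ℝ × V}
    (h0 : m 0 = 0) (ha2 : a.2 ≠ 0) (haS : a ∈ support m) (hleva : lev w a = 0)
    (hh : ∀ C : ℝ, {s ∈ support m | lev w s ≤ C}.Finite)
    (hgen : ∀ x ∈ Ach m, ∀ y ∈ Ach m, lev w x = lev w y → ∃ t : ℝ, x - y = t • a)
    {c : ℝ × V} {r : ℝ} (hr : 0 < r)
    (hP : ∀ l : ℝ × V, coeffF m l ≠ 0 → (l - c).1 = r * ‖(l - c).2‖ ^ 2) :
    ((∀ s ∈ support m, (∃ t : ℝ, s = t • a) → s = a) ∧ m a = 1) ∧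
      ∃ lam : ℝ × V, coeffF m lam ≠ 0 ∧ coeffF m (lam + a) ≠ 0 := by
  classical
  have ha0 : a ≠ 0 := fun h => ha2 (by rw [h]; rfl)
  have hgen0 : ∀ v ∈ support m, lev w v = 0 → ∃ t : ℝ, v = t • a := by
    intro v hv hlev0
    obtain ⟨t, ht⟩ := hgen v (single_mem_Ach hv) 0 (zero_mem_Ach m)
      (by rw [hlev0, lev_zero])
    rw [sub_zero] at ht
    exact ⟨t, ht⟩
  -- the finite set S0 of support elements on the line ℝa
  have hS0fin : {s ∈ support m | ∃ t : ℝ, s = t • a}.Finite := by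
    apply (hh 0).subset
    rintro s ⟨hs, t, rfl⟩
    exact ⟨hs, by rw [lev_smul, hleva, mul_zero]⟩
  set S0 := hS0fin.toFinset with hS0def
  have hS0mem : ∀ s, s ∈ S0 ↔ s ∈ support m ∧ ∃ t : ℝ, s = t • a := by
    intro s
    rw [hS0def, Set.Finite.mem_toFinset]
    exact Iff.rfl
  have hS0S : ∀ s ∈ S0, s ∈ support m := fun s hs => ((hS0mem s).1 hs).1
  have hS0lev : ∀ s ∈ S0, lev w s = 0 := by
    intro s hs
    obtain ⟨_, t, rfl⟩ := (hS0mem s).1 hs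
    rw [lev_smul, hleva, mul_zero]
  have haS0 : a ∈ S0 := (hS0mem a).2 ⟨haS, 1, (one_smul _ _).symm⟩
  have hS0r : ∀ s ∈ S0, s = ratio a s • a := by
    intro s hs
    obtain ⟨_, t, rfl⟩ := (hS0mem s).1 hs
    rw [ratio_of_smul ha2]
  have hS0ne : ∀ s ∈ S0, ratio a s ≠ 0 := by
    intro s hs hc
    have h1 := hS0r s hs
    rw [hc, zero_smul] at h1
    have := hS0S s hs
    rw [h1, mem_support] at this
    exact this h0
  have hra : ratio a a = 1 := by
    have := ratio_of_smul ha2 1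
    rwa [one_smul] at this
  -- the negative finite set
  have hNfin : {s ∈ support m | lev w s < 0}.Finite :=
    (hh 0).subset (fun s hs => ⟨hs.1, le_of_lt hs.2⟩)
  set Nf := hNfin.toFinset with hNdef
  have hNfmem : ∀ s, s ∈ Nf ↔ s ∈ support m ∧ lev w s < 0 := by
    intro s
    rw [hNdef, Set.Finite.mem_toFinset]
    exact Iff.rfl
  have hNS : ∀ s ∈ Nf, s ∈ support m := fun s hs => ((hNfmem s).1 hs).1
  set ν₀ := nuG m Nf with hν₀def
  have hν₀term : term m ν₀ ≠ 0 := nuG_term hNS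
  set lam := wsum ν₀ with hlamdef
  set M := lev w lam with hMdef
  have hlamAch : lam ∈ Ach m := wsum_mem_Ach hν₀term
  have hAfin : (SetAf m w M).Finite := SetAf_finite hh M
  set A := hAfin.toFinset with hAdef
  have hmemA : ∀ ν, ν ∈ A ↔ term m ν ≠ 0 ∧ lev w (wsum ν) = M := by
    intro ν
    rw [hAdef, Set.Finite.mem_toFinset]
    exact Iff.rfl
  have hν₀A : ν₀ ∈ A := (hmemA ν₀).2 ⟨hν₀term, rfl⟩
  -- representation of admissible ν on the line
  have hline : ∀ ν ∈ A, wsum ν = lam + ratio a (wsum ν - lam) • a := by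
    intro ν hν
    rw [hmemA] at hν
    obtain ⟨t, ht⟩ := hgen (wsum ν) (wsum_mem_Ach hν.1) lam hlamAch (by rw [hν.2])
    rw [ht, ratio_of_smul ha2, ← ht]
    abel
  -- fiber identification of coefficients on the line
  have hfin_u : ∀ u : ℝ, {ν : (ℝ × V) →₀ ℕ | term m ν ≠ 0 ∧ wsum ν = lam + u • a}.Finite := by
    intro u
    apply hAfin.subset
    rintro ν ⟨h1, h2⟩
    refine ⟨h1, ?_⟩
    rw [h2, lev_add, lev_smul, hleva, mul_zero, add_zero]
  have hfiber : ∀ u : ℝ, coeffF m (lam + u • a)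
      = ∑ ν ∈ A.filter (fun ν => ratio a (wsum ν - lam) = u), term m ν := by
    intro u
    rw [coeffF_eq_sum (hfin_u u)]
    apply Finset.sum_congr _ (fun _ _ => rfl)
    ext ν
    rw [Set.Finite.mem_toFinset, Finset.mem_filter, hmemA]
    constructor
    · rintro ⟨h1, h2⟩
      refine ⟨⟨h1, by rw [h2, lev_add, lev_smul, hleva, mul_zero, add_zero]⟩, ?_⟩
      rw [h2]
      have : lam + u • a - lam = u • a := by abel
      rw [this, ratio_of_smul ha2]
    · rintro ⟨⟨h1, h2⟩, h3⟩
      refine ⟨h1, ?_⟩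
      have := hline ν ((hmemA ν).2 ⟨h1, h2⟩)
      rwa [h3] at this
  -- splitting an admissible ν into its S0-part and its off-line part
  have hsplitν : ∀ ν : (ℝ × V) →₀ ℕ,
      ν.filter (· ∈ S0) + ν.filter (fun v => ¬ v ∈ S0) = ν :=
    fun ν => Finsupp.filter_pos_add_filter_neg ν _
  have htermsplit : ∀ ν : (ℝ × V) →₀ ℕ,
      term m ν = term m (ν.filter (· ∈ S0)) * term m (ν.filter (fun v => ¬ v ∈ S0)) := by
    intro ν
    have hdisj : Disjoint (ν.filter (· ∈ S0)).support
        (ν.filter (fun v => ¬ v ∈ S0)).support := by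
      rw [Finsupp.support_filter, Finsupp.support_filter, Finset.disjoint_left]
      intro x hx hx2
      rw [Finset.mem_filter] at hx hx2
      exact hx2.2 hx.2
    conv_lhs => rw [← hsplitν ν]
    exact term_mul_of_disjoint hdisj
  -- the negative extremal data
  set S0neg := S0.filter (fun s => ratio a s < 0) with hS0negdef
  have hS0negS : ∀ s ∈ S0neg, s ∈ support m := fun s hs =>
    hS0S s (Finset.mem_filter.1 hs).1
  have hNnegdisj : Disjoint Nf S0neg := by
    rw [Finset.disjoint_left]
    intro x hx hx2
    have h1 := ((hNfmem x).1 hx).2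
    have h2 := hS0lev x (Finset.mem_filter.1 hx2).1
    rw [h2] at h1
    exact lt_irrefl 0 h1
  set ustar := ∑ s ∈ S0neg, (m s : ℝ) * ratio a s with hustardef
  set nustar := ν₀ + nuG m S0neg with hnustardef
  have hwsum_neg : wsum (nuG m S0neg) = ustar • a := by
    rw [nuG_wsum, hustardef, Finset.sum_smul]
    apply Finset.sum_congr rfl
    intro s hs
    have h := hS0r s (Finset.mem_filter.1 hs).1
    calc (m s) • s = (m s) • (ratio a s • a) := by rw [← h]
      _ = ((m s : ℝ) * ratio a s) • a := by rw [← Nat.cast_smul_eq_nsmul ℝ, smul_smul]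
  have hnustar_term : term m nustar ≠ 0 := by
    rw [hnustardef]
    have hdisj : Disjoint ν₀.support (nuG m S0neg).support := by
      rw [hν₀def, nuG_supp hNS, nuG_supp hS0negS]
      exact hNnegdisj
    rw [term_mul_of_disjoint hdisj]
    exact mul_ne_zero hν₀term (nuG_term hS0negS)
  have hnustar_wsum : wsum nustar = lam + ustar • a := by
    rw [hnustardef, wsum_add, hwsum_neg, hlamdef]
  have hnustarA : nustar ∈ A := by
    rw [hmemA]
    refine ⟨hnustar_term, ?_⟩
    rw [hnustar_wsum, lev_add, lev_smul, hleva, mul_zero, add_zero]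
  have hnustar_ratio : ratio a (wsum nustar - lam) = ustar := by
    rw [hnustar_wsum]
    have : lam + ustar • a - lam = ustar • a := by abel
    rw [this, ratio_of_smul ha2]
  -- uniqueness of the extremal admissible ν
  have hkey : ∀ ν ∈ A, ratio a (wsum ν - lam) = ustar → ν = nustar := by
    intro ν hν hrat
    have hw : wsum ν = lam + ustar • a := by
      have := hline ν hν
      rwa [hrat] at this
    rw [hmemA] at hν
    set νon := ν.filter (· ∈ S0) with hνon
    set νoff := ν.filter (fun v => ¬ v ∈ S0) with hνoff
    have ht1 : term m νon ≠ 0 := left_ne_zero_of_mul ((htermsplit ν) ▸ hν.1)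
    have ht2 : term m νoff ≠ 0 := right_ne_zero_of_mul ((htermsplit ν) ▸ hν.1)
    have hws : wsum νon + wsum νoff = wsum ν := by rw [← wsum_add, hsplitν]
    have hlon : lev w (wsum νon) = 0 := lvl_filter_S0 hS0lev ν
    have hloff : lev w (wsum νoff) = M := by
      have h1 := congrArg (lev w) hws
      rw [lev_add, hlon, zero_add] at h1
      rw [h1, hν.2]
    have hoffzero : ∀ s ∈ S0, νoff s = 0 := fun s hs =>
      Finsupp.filter_apply_neg _ _ (not_not.2 hs)
    have hoff : νoff = ν₀ :=
      min_unique hS0mem hNfmem hgen0 νoff ht2 (by rw [hloff, hMdef, hlamdef]) hoffzero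
    -- the on-line part
    have hsuppon : νon.support ⊆ S0 := by
      intro v hv
      rw [hνon, Finsupp.support_filter, Finset.mem_filter] at hv
      exact hv.2
    have hwon : wsum νon = ustar • a := by
      have h1 : wsum νon + lam = lam + ustar • a := by
        rw [← hw, ← hws, hoff, hlamdef]
      have h2 : wsum νon + lam = ustar • a + lam := by rw [h1]; abel
      exact add_right_cancel h2
    set tsum := ∑ v ∈ νon.support, (νon v : ℝ) * ratio a v with htsumdef
    have hwon2 : wsum νon = tsum • a := wsum_filter_S0 hS0r ν
    have htu : tsum = ustar := by
      have h1 : (tsum - ustar) • a = 0 := by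
        rw [sub_smul, ← hwon2, hwon]
        abel
      rcases smul_eq_zero.1 h1 with h | h
      · linarith [sub_eq_zero.1 (by linarith [h] : tsum - ustar = 0)]
      · exact absurd h ha0
    -- νon must be the canonical negative extremal
    have htsumS0 : ∑ v ∈ S0, (νon v : ℝ) * ratio a v = tsum := by
      rw [htsumdef]
      exact (Finset.sum_subset hsuppon (fun v _ hv => by
        rw [Finsupp.notMem_support_iff.1 hv]; simp)).symm
    have hustarS0 : ∑ v ∈ S0, (if v ∈ S0neg then (m v : ℝ) else 0) * ratio a v = ustar := by
      rw [hustardef, Finset.sum_filter]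
      apply Finset.sum_congr rfl
      intro v hv
      by_cases hneg : ratio a v < 0
      · have hmem : v ∈ S0neg := Finset.mem_filter.2 ⟨hv, hneg⟩
        simp only [if_pos hmem, if_pos hneg]
      · have hmem : v ∉ S0neg := fun hc => hneg (Finset.mem_filter.1 hc).2
        simp only [if_neg hmem, if_neg hneg, zero_mul]
    -- sign analysis forces νon to be the canonical extremal
    have hg0 : ∑ v ∈ S0, ((νon v : ℝ) - if v ∈ S0neg then (m v : ℝ) else 0) * ratio a v = 0 := by
      simp only [sub_mul]
      rw [Finset.sum_sub_distrib, htsumS0, hustarS0, htu, sub_self]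
    have hgnonneg : ∀ v ∈ S0,
        0 ≤ ((νon v : ℝ) - if v ∈ S0neg then (m v : ℝ) else 0) * ratio a v := by
      intro v hv
      by_cases hneg : ratio a v < 0
      · have hmem : v ∈ S0neg := Finset.mem_filter.2 ⟨hv, hneg⟩
        rw [if_pos hmem]
        have h2 : (νon v : ℝ) ≤ (m v : ℝ) := by exact_mod_cast term_le ht1 v
        nlinarith
      · have hmem : v ∉ S0neg := fun hc => hneg (Finset.mem_filter.1 hc).2
        rw [if_neg hmem, sub_zero]
        have h2 : ratio a v ≠ 0 := hS0ne v hv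
        have h3 : 0 < ratio a v := lt_of_le_of_ne (not_lt.1 hneg) (Ne.symm h2)
        have h4 : (0 : ℝ) ≤ (νon v : ℝ) := Nat.cast_nonneg _
        nlinarith
    have hgzero := (Finset.sum_eq_zero_iff_of_nonneg hgnonneg).1 hg0
    have hνoneq : νon = nuG m S0neg := by
      ext v
      rw [nuG_apply]
      by_cases hvS0 : v ∈ S0
      · have h1 := hgzero v hvS0
        have h2 : ratio a v ≠ 0 := hS0ne v hvS0
        by_cases hneg : ratio a v < 0
        · have hmem : v ∈ S0neg := Finset.mem_filter.2 ⟨hvS0, hneg⟩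
          rw [if_pos hmem] at h1 ⊢
          rcases mul_eq_zero.1 h1 with h | h
          · have : (νon v : ℝ) = (m v : ℝ) := by linarith [sub_eq_zero.1 h]
            exact_mod_cast this
          · exact absurd h h2
        · have hmem : v ∉ S0neg := fun hc => hneg (Finset.mem_filter.1 hc).2
          rw [if_neg hmem] at h1 ⊢
          rw [sub_zero] at h1
          rcases mul_eq_zero.1 h1 with h | h
          · exact_mod_cast h
          · exact absurd h h2
      · have hmem : v ∉ S0neg := fun hc => hvS0 (Finset.mem_filter.1 hc).1
        rw [if_neg hmem]
        exact Finsupp.filter_apply_neg _ _ hvS0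
    rw [hnustardef, ← hoff, ← hνoneq, add_comm]
    exact (hsplitν ν).symm
  -- the extremal coefficient is nonzero
  have hfilter_eq : A.filter (fun ν => ratio a (wsum ν - lam) = ustar) = {nustar} := by
    ext ν
    rw [Finset.mem_filter, Finset.mem_singleton]
    constructor
    · rintro ⟨h1, h2⟩
      exact hkey ν h1 h2
    · rintro rfl
      exact ⟨hnustarA, hnustar_ratio⟩
  have hcoeff_ne : coeffF m (lam + ustar • a) ≠ 0 := by
    rw [hfiber, hfilter_eq, Finset.sum_singleton]
    exact hnustar_term
  -- trivial filter identity
  have hAfilter : A.filter (fun ν => ∀ s ∈ (∅ : Finset (ℝ × V)), ν s = 0) = A :=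
    Finset.filter_true_of_mem (fun _ _ => by simp)
  by_cases hN2 : (∃ s ∈ S0, 2 ≤ m s) ∨ (∃ s₁ ∈ S0, ∃ s₂ ∈ S0, s₁ ≠ s₂)
  · exfalso
    have hEV0 : ∑ ν ∈ A, term m ν = 0 := by
      rcases hN2 with ⟨s1, hs1, _⟩ | ⟨s1, hs1, _, _, _⟩ <;>
      · have := ev_zero hAfin ∅ (Finset.notMem_empty s1) (hS0S s1 hs1) (hS0lev s1 hs1)
        rwa [hAfilter] at this
    have hL10 : ∑ ν ∈ A, (term m ν : ℝ) * ratio a (wsum ν - lam) = 0 := by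
      rcases hN2 with ⟨s1, hs1, hm2⟩ | ⟨s1, hs1, s2, hs2, hne⟩
      · have hcore := l1_core hAfin ∅ (Finset.notMem_empty s1) (hS0lev s1 hs1) a lam
        rw [hAfilter] at hcore
        rw [hcore, alt_choose_zero (by omega : m s1 ≠ 0), alt_choose_mul_zero hm2]
        simp
      · have hcore := l1_core hAfin ∅ (Finset.notMem_empty s1) (hS0lev s1 hs1) a lam
        rw [hAfilter] at hcore
        have hE2 : ∑ ν ∈ A.filter
            (fun ν => ∀ s ∈ insert s1 (∅ : Finset (ℝ × V)), ν s = 0), term m ν = 0 := by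
          apply ev_zero hAfin _ ?_ (hS0S s2 hs2) (hS0lev s2 hs2)
          intro hc
          rcases Finset.mem_insert.1 hc with h | h
          · exact hne h.symm
          · exact Finset.notMem_empty _ h
        rw [hcore, hE2, alt_choose_zero (mem_support.1 (hS0S s1 hs1))]
        simp
    set J := A.image (fun ν => ratio a (wsum ν - lam)) with hJdef
    have hJmap : ∀ ν ∈ A, ratio a (wsum ν - lam) ∈ J := fun ν hν =>
      Finset.mem_image_of_mem _ hν
    have hEVdec : ∑ u ∈ J, coeffF m (lam + u • a) = 0 := by
      rw [Finset.sum_congr rfl (fun u _ => hfiber u),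
        Finset.sum_fiberwise_of_maps_to hJmap (term m)]
      exact hEV0
    have hL1dec : ∑ u ∈ J, (coeffF m (lam + u • a) : ℝ) * u = 0 := by
      have h1 : ∀ u ∈ J, (coeffF m (lam + u • a) : ℝ) * u
          = ∑ ν ∈ A.filter (fun ν => ratio a (wsum ν - lam) = u),
              (term m ν : ℝ) * ratio a (wsum ν - lam) := by
        intro u _
        rw [hfiber u]
        have h2 : ∀ ν ∈ A.filter (fun ν => ratio a (wsum ν - lam) = u),
            (term m ν : ℝ) * ratio a (wsum ν - lam) = (term m ν : ℝ) * u := by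
          intro ν hν
          rw [(Finset.mem_filter.1 hν).2]
        rw [Finset.sum_congr rfl h2, ← Finset.sum_mul]
        push_cast
        ring
      rw [Finset.sum_congr rfl h1, Finset.sum_fiberwise_of_maps_to hJmap
        (fun ν => (term m ν : ℝ) * ratio a (wsum ν - lam))]
      exact hL10
    set J' := J.filter (fun u => coeffF m (lam + u • a) ≠ 0) with hJ'def
    have hsum1 : ∑ u ∈ J', coeffF m (lam + u • a) = 0 := by
      rw [Finset.sum_filter_of_ne (fun u _ h => h)]
      exact hEVdec
    have hsum2 : ∑ u ∈ J', (coeffF m (lam + u • a) : ℝ) * u = 0 := by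
      have hcond : ∀ u ∈ J, (coeffF m (lam + u • a) : ℝ) * u ≠ 0 →
          coeffF m (lam + u • a) ≠ 0 := by
        intro u _ h hc
        apply h
        rw [hc]
        simp
      rw [Finset.sum_filter_of_ne hcond]
      exact hL1dec
    have hustar_mem : ustar ∈ J' := by
      rw [hJ'def, Finset.mem_filter]
      exact ⟨Finset.mem_image.2 ⟨nustar, hnustarA, hnustar_ratio⟩, hcoeff_ne⟩
    have hcard : J'.card ≤ 2 := by
      by_contra hgt
      push_neg at hgt
      obtain ⟨x, y, z, hx, hy, hz, hxy, hxz, hyz⟩ := Finset.two_lt_card_iff.1 hgt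
      have ex := hP _ (Finset.mem_filter.1 hx).2
      have ey := hP _ (Finset.mem_filter.1 hy).2
      have ez := hP _ (Finset.mem_filter.1 hz).2
      rcases quad_two hr ha2 lam ex ey ez with h | h | h
      exacts [hxy h, hxz h, hyz h]
    have h1le : 1 ≤ J'.card := Finset.card_pos.2 ⟨ustar, hustar_mem⟩
    rcases (by omega : J'.card = 1 ∨ J'.card = 2) with hc1 | hc2
    · obtain ⟨x, hx⟩ := Finset.card_eq_one.1 hc1
      rw [hx] at hsum1 hustar_mem
      rw [Finset.mem_singleton] at hustar_mem
      rw [Finset.sum_singleton, ← hustar_mem] at hsum1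
      exact hcoeff_ne hsum1
    · obtain ⟨x, y, hxy, hJ2⟩ := Finset.card_eq_two.1 hc2
      have hxJ : x ∈ J' := by rw [hJ2]; exact Finset.mem_insert_self _ _
      have hcx : coeffF m (lam + x • a) ≠ 0 := (Finset.mem_filter.1 hxJ).2
      rw [hJ2, Finset.sum_pair hxy] at hsum1 hsum2
      have hcy : (coeffF m (lam + y • a) : ℝ) = -(coeffF m (lam + x • a) : ℝ) := by
        have h := congrArg (Int.cast : ℤ → ℝ) hsum1
        push_cast at h
        linarith
      rw [hcy] at hsum2
      have hfac : (coeffF m (lam + x • a) : ℝ) * (x - y) = 0 := by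
        ring_nf
        ring_nf at hsum2
        linarith
      rcases mul_eq_zero.1 hfac with h | h
      · exact hcx (by exact_mod_cast h)
      · exact hxy (by linarith [sub_eq_zero.1 h])
  · -- degenerate case: S0 = {a} and m a = 1
    push_neg at hN2
    obtain ⟨hallm, hallEq⟩ := hN2
    have hS0a : ∀ s ∈ S0, s = a := fun s hs => hallEq s hs a haS0
    have hma : m a = 1 := by
      have h1 := mem_support.1 haS
      have h2 := hallm a haS0
      omega
    have hS0neg_empty : S0neg = ∅ := by
      rw [Finset.eq_empty_iff_forall_notMem]
      intro s hs
      have h1 := (Finset.mem_filter.1 hs).2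
      have h2 := hS0a s (Finset.mem_filter.1 hs).1
      rw [h2, hra] at h1
      linarith
    have hustar0 : ustar = 0 := by
      rw [hustardef, hS0neg_empty, Finset.sum_empty]
    refine ⟨⟨fun s hs hex => hS0a s ((hS0mem s).2 ⟨hs, hex⟩), hma⟩, lam, ?_, ?_⟩
    · have := hcoeff_ne
      rwa [hustar0, zero_smul, add_zero] at this
    · set νa := ν₀ + Finsupp.single a 1 with hνadef
      have hν₀a : ν₀ a = 0 := by
        rw [hν₀def, nuG_apply, if_neg]
        intro hc
        have := ((hNfmem a).1 hc).2
        rw [hleva] at this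
        exact lt_irrefl 0 this
      have hterm_νa : term m νa = -(term m ν₀) := by
        rw [hνadef, term_add_single 1 hν₀a, hma]
        norm_num
      have hwsum_νa : wsum νa = lam + (1 : ℝ) • a := by
        rw [hνadef, wsum_add, wsum_single, hlamdef, one_smul, one_smul]
      have hνaA : νa ∈ A := by
        rw [hmemA]
        refine ⟨by rw [hterm_νa]; exact neg_ne_zero.2 hν₀term, ?_⟩
        rw [hwsum_νa, lev_add, lev_smul, hleva, mul_zero, add_zero]
      have hratio_νa : ratio a (wsum νa - lam) = 1 := by
        rw [hwsum_νa]
        have : lam + (1 : ℝ) • a - lam = (1 : ℝ) • a := by abel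
        rw [this, ratio_of_smul ha2]
      have hfa : A.filter (fun ν => ratio a (wsum ν - lam) = 1) = {νa} := by
        ext ν
        rw [Finset.mem_filter, Finset.mem_singleton]
        constructor
        · rintro ⟨h1, h2⟩
          have hw : wsum ν = lam + (1 : ℝ) • a := by
            have := hline ν h1
            rwa [h2] at this
          rw [hmemA] at h1
          set νon := ν.filter (· ∈ S0) with hνon2
          set νoff := ν.filter (fun v => ¬ v ∈ S0) with hνoff2
          have ht1 : term m νon ≠ 0 := left_ne_zero_of_mul ((htermsplit ν) ▸ h1.1)
          have ht2 : term m νoff ≠ 0 := right_ne_zero_of_mul ((htermsplit ν) ▸ h1.1)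
          have hws : wsum νon + wsum νoff = wsum ν := by rw [← wsum_add, hsplitν]
          have hlon : lev w (wsum νon) = 0 := lvl_filter_S0 hS0lev ν
          have hloff : lev w (wsum νoff) = M := by
            have hh1 := congrArg (lev w) hws
            rw [lev_add, hlon, zero_add] at hh1
            rw [hh1, h1.2]
          have hoff : νoff = ν₀ :=
            min_unique hS0mem hNfmem hgen0 νoff ht2 (by rw [hloff, hMdef, hlamdef])
              (fun s hs => Finsupp.filter_apply_neg _ _ (not_not.2 hs))
          have hsuppon : νon.support ⊆ S0 := by
            intro v hv
            rw [hνon2, Finsupp.support_filter, Finset.mem_filter] at hv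
            exact hv.2
          have hwon : wsum νon = (1 : ℝ) • a := by
            have hh1 : wsum νon + lam = lam + (1 : ℝ) • a := by
              rw [← hw, ← hws, hoff, hlamdef]
            have hh2 : wsum νon + lam = (1 : ℝ) • a + lam := by rw [hh1]; abel
            exact add_right_cancel hh2
          have hsupp_sub : νon.support ⊆ {a} := fun v hv =>
            Finset.mem_singleton.2 (hS0a v (hsuppon hv))
          have hνon_single : νon = Finsupp.single a (νon a) := by
            ext v
            by_cases hv : v = a
            · rw [hv, Finsupp.single_eq_same]
            · rw [Finsupp.single_eq_of_ne hv]
              by_contra hc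
              exact hv (Finset.mem_singleton.1
                (hsupp_sub (Finsupp.mem_support_iff.2 hc)))
          have hνona : νon a = 1 := by
            have hh1 : wsum νon = (νon a) • a := by
              rw [hνon_single, wsum_single]
              rw [← hνon_single]
            rw [hh1] at hwon
            have hh2 : ((νon a : ℝ) - 1) • a = 0 := by
              rw [sub_smul, one_smul, ← Nat.cast_smul_eq_nsmul ℝ] at *
              rw [hwon]
              abel
            rcases smul_eq_zero.1 hh2 with h | h
            · have : (νon a : ℝ) = 1 := by linarith [sub_eq_zero.1 h]
              exact_mod_cast this
            · exact absurd h ha0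
          rw [hνadef, ← hoff, ← hνona, ← hνon_single, add_comm]
          exact (hsplitν ν).symm
        · rintro rfl
          exact ⟨hνaA, hratio_νa⟩
      have hfinal : coeffF m (lam + (1 : ℝ) • a) ≠ 0 := by
        rw [hfiber, hfa, Finset.sum_singleton, hterm_νa]
        exact neg_ne_zero.2 hν₀term
      rwa [one_smul] at hfinal


/-- Variant of `fiber_reindex` keeping track of the position on the line `μ + ℝa`. -/
lemma fiber_reindex_u {α : Type*} [AddCommMonoid α] {m : ℝ × V → ℕ} {w : V} {ℓ : ℝ}
    (hA : (SetAf m w ℓ).Finite) (X : Finset (ℝ × V)) {sstar : ℝ × V}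
    (hsX : sstar ∉ X) (hlev : lev w sstar = 0) (a μ : ℝ × V) (u : ℝ)
    (g : ((ℝ × V) →₀ ℕ) → α) :
    ∑ ν ∈ hA.toFinset.filter
        (fun ν => (∀ s ∈ X, ν s = 0) ∧ ratio a (wsum ν - μ) = u), g ν
    = ∑ k ∈ Finset.range (m sstar + 1),
        ∑ ν ∈ hA.toFinset.filter
          (fun ν => (∀ s ∈ insert sstar X, ν s = 0) ∧
            ratio a (wsum ν - μ) = u - k * ratio a sstar),
          g (ν + Finsupp.single sstar k) := by
  classical
  have hmem : ∀ ν, ν ∈ hA.toFinset ↔ term m ν ≠ 0 ∧ lev w (wsum ν) = ℓ := by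
    intro ν
    rw [Set.Finite.mem_toFinset]
    exact Iff.rfl
  rw [← Finset.sum_fiberwise_of_maps_to (t := Finset.range (m sstar + 1))
    (g := fun ν => ν sstar) ?hmap g]
  case hmap =>
    intro ν hν
    rw [Finset.mem_filter] at hν
    rw [Finset.mem_range]
    have := term_le ((hmem ν).1 hν.1).1 sstar
    show ν sstar < m sstar + 1
    omega
  apply Finset.sum_congr rfl
  intro k hk
  rw [Finset.mem_range] at hk
  have hkle : k ≤ m sstar := by omega
  apply Finset.sum_nbij' (i := Finsupp.erase sstar) (j := fun ν => ν + Finsupp.single sstar k)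
  · -- forward membership
    intro ν hν
    rw [Finset.mem_filter, Finset.mem_filter] at hν
    obtain ⟨⟨hνA, hνX, hνu⟩, hν3⟩ := hν
    have hν3' : ν sstar = k := hν3
    rw [hmem] at hνA
    have hrecon : Finsupp.erase sstar ν + Finsupp.single sstar k = ν := by
      conv_rhs => rw [← Finsupp.erase_add_single sstar ν]
      rw [hν3']
    have hdisj : Disjoint (Finsupp.erase sstar ν).support
        (Finsupp.single sstar k).support := by
      rw [Finset.disjoint_left]
      intro x hx hx2
      have hxne : x ≠ sstar := by
        rw [Finsupp.support_erase] at hx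
        exact Finset.ne_of_mem_erase hx
      exact hxne (Finset.mem_singleton.1 (Finsupp.support_single_subset hx2))
    have hterm : term m ν = term m (Finsupp.erase sstar ν) * term m (Finsupp.single sstar k) := by
      conv_lhs => rw [← hrecon]
      exact term_mul_of_disjoint hdisj
    have hwsum : wsum ν = wsum (Finsupp.erase sstar ν) + k • sstar := by
      conv_lhs => rw [← hrecon]
      rw [wsum_add, wsum_single]
    rw [Finset.mem_filter]
    refine ⟨?_, ?_, ?_⟩
    · rw [hmem]
      constructor
      · exact left_ne_zero_of_mul (hterm ▸ hνA.1)
      · have : lev w (wsum ν) = lev w (wsum (Finsupp.erase sstar ν)) := by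
          rw [hwsum, lev_add, lev_nsmul, hlev]
          ring
        rw [← this, hνA.2]
    · intro s hs
      rcases Finset.mem_insert.1 hs with h | h
      · rw [h]; exact Finsupp.erase_same
      · rw [Finsupp.erase_ne (by rintro rfl; exact hsX h)]
        exact hνX s h
    · have h1 : wsum (Finsupp.erase sstar ν) - μ = (wsum ν - μ) - k • sstar := by
        rw [hwsum]; abel
      rw [h1, ← Nat.cast_smul_eq_nsmul ℝ, sub_eq_add_neg, ← neg_smul, ratio_add, ratio_smul,
        hνu]
      ring
  · -- backward membership
    intro ν hν
    rw [Finset.mem_filter] at hν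
    obtain ⟨hνA, hνX, hνu⟩ := hν
    rw [hmem] at hνA
    have hνs : ν sstar = 0 := hνX sstar (Finset.mem_insert_self _ _)
    have hdisj : Disjoint ν.support (Finsupp.single sstar k).support := by
      rw [Finset.disjoint_left]
      intro x hx hx2
      have : x = sstar := Finset.mem_singleton.1 (Finsupp.support_single_subset hx2)
      rw [this, Finsupp.mem_support_iff] at hx
      exact hx hνs
    have hterm := term_mul_of_disjoint (m := m) hdisj
    have hsig : term m (Finsupp.single sstar k) ≠ 0 := by
      rw [term_single]
      apply mul_ne_zero (pow_ne_zero _ (by norm_num))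
      exact_mod_cast (Nat.choose_pos hkle).ne'
    rw [Finset.mem_filter, Finset.mem_filter]
    refine ⟨⟨?_, ?_, ?_⟩, ?_⟩
    · rw [hmem]
      refine ⟨by rw [hterm]; exact mul_ne_zero hνA.1 hsig, ?_⟩
      rw [wsum_add, wsum_single, lev_add, lev_nsmul, hlev, hνA.2]
      ring
    · intro s hs
      rw [Finsupp.add_apply, hνX s (Finset.mem_insert_of_mem hs),
        Finsupp.single_apply_eq_zero.2 (by rintro rfl; exact absurd hs hsX), add_zero]
    · have h1 : wsum (ν + Finsupp.single sstar k) - μ = (wsum ν - μ) + k • sstar := by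
        rw [wsum_add, wsum_single]; abel
      rw [h1, ← Nat.cast_smul_eq_nsmul ℝ, ratio_add, ratio_smul, hνu]
      ring
    · show (ν + Finsupp.single sstar k) sstar = k
      rw [Finsupp.add_apply, hνs, Finsupp.single_eq_same, zero_add]
  · -- left inverse
    intro ν hν
    rw [Finset.mem_filter] at hν
    have hk' : ν sstar = k := hν.2
    conv_rhs => rw [← Finsupp.erase_add_single sstar ν]
    rw [hk']
  · -- right inverse
    intro ν hν
    rw [Finset.mem_filter] at hν
    have hνs : ν sstar = 0 := hν.2.1 sstar (Finset.mem_insert_self _ _)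
    rw [Finsupp.erase_add, Finsupp.erase_single]
    have : Finsupp.erase sstar ν = ν := by
      ext s
      by_cases hs : s = sstar
      · rw [hs, Finsupp.erase_same, hνs]
      · rw [Finsupp.erase_ne hs]
    rw [this, add_zero]
  · -- function values
    intro ν hν
    rw [Finset.mem_filter] at hν
    have hk' : ν sstar = k := hν.2
    congr 1
    conv_lhs => rw [← Finsupp.erase_add_single sstar ν]
    rw [hk']

/-- Integrality of the second intersection parameter: for every `μ ∈ Λ(m)`, the quantity
`(a.1 - 2r⟨(μ-c).2, a.2⟩) / (r‖a.2‖²)` is an integer. -/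
lemma tau_int {m : ℝ × V → ℕ} {w : V} {a : ℝ × V}
    (ha2 : a.2 ≠ 0) (hleva : lev w a = 0)
    (hh : ∀ C : ℝ, {s ∈ support m | lev w s ≤ C}.Finite)
    (hgen : ∀ x ∈ Ach m, ∀ y ∈ Ach m, lev w x = lev w y → ∃ t : ℝ, x - y = t • a)
    (hma : m a = 1)
    {c : ℝ × V} {r : ℝ} (hr : 0 < r)
    (hP : ∀ l : ℝ × V, coeffF m l ≠ 0 → (l - c).1 = r * ‖(l - c).2‖ ^ 2)
    {μ : ℝ × V} (hμ : coeffF m μ ≠ 0) :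
    ∃ z : ℤ, a.1 - 2 * r * ⟪(μ - c).2, a.2⟫ = z * (r * ‖a.2‖ ^ 2) := by
  classical
  have ha0 : a ≠ 0 := fun h => ha2 (by rw [h]; rfl)
  have hra : ratio a a = 1 := by
    have := ratio_of_smul ha2 1
    rwa [one_smul] at this
  set ℓ := lev w μ with hℓdef
  have hAfin : (SetAf m w ℓ).Finite := SetAf_finite hh ℓ
  set A := hAfin.toFinset with hAdef
  have hmemA : ∀ ν, ν ∈ A ↔ term m ν ≠ 0 ∧ lev w (wsum ν) = ℓ := by
    intro ν
    rw [hAdef, Set.Finite.mem_toFinset]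
    exact Iff.rfl
  have hfin_u : ∀ u : ℝ, {ν : (ℝ × V) →₀ ℕ | term m ν ≠ 0 ∧ wsum ν = μ + u • a}.Finite := by
    intro u
    apply hAfin.subset
    rintro ν ⟨h1, h2⟩
    refine ⟨h1, ?_⟩
    rw [h2, lev_add, lev_smul, hleva, mul_zero, add_zero]
  have hμAch : μ ∈ Ach m := by
    have h0' : {ν : (ℝ × V) →₀ ℕ | term m ν ≠ 0 ∧ wsum ν = μ}.Finite := by
      have := hfin_u 0
      rwa [zero_smul, add_zero] at this
    obtain ⟨ν, h1, h2⟩ := exists_active_of_coeffF_ne_zero h0' hμ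
    rw [← h2]
    exact wsum_mem_Ach h1
  have hline : ∀ ν ∈ A, wsum ν = μ + ratio a (wsum ν - μ) • a := by
    intro ν hν
    rw [hmemA] at hν
    obtain ⟨t, ht⟩ := hgen (wsum ν) (wsum_mem_Ach hν.1) μ hμAch hν.2
    rw [ht, ratio_of_smul ha2, ← ht]
    abel
  have hfiber : ∀ u : ℝ, coeffF m (μ + u • a)
      = ∑ ν ∈ A.filter
          (fun ν => (∀ s ∈ (∅ : Finset (ℝ × V)), ν s = 0) ∧ ratio a (wsum ν - μ) = u),
        term m ν := by
    intro u
    rw [coeffF_eq_sum (hfin_u u)]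
    apply Finset.sum_congr _ (fun _ _ => rfl)
    ext ν
    rw [Set.Finite.mem_toFinset, Finset.mem_filter, hmemA]
    constructor
    · rintro ⟨h1, h2⟩
      refine ⟨⟨h1, by rw [h2, lev_add, lev_smul, hleva, mul_zero, add_zero]⟩,
        fun s hs => absurd hs (Finset.notMem_empty s), ?_⟩
      rw [h2]
      have : μ + u • a - μ = u • a := by abel
      rw [this, ratio_of_smul ha2]
    · rintro ⟨⟨h1, h2⟩, _, h3⟩
      refine ⟨h1, ?_⟩
      have := hline ν ((hmemA ν).2 ⟨h1, h2⟩)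
      rwa [h3] at this
  -- the telescoping function e
  set e : ℝ → ℤ := fun u => ∑ ν ∈ A.filter
      (fun ν => (∀ s ∈ insert a (∅ : Finset (ℝ × V)), ν s = 0) ∧
        ratio a (wsum ν - μ) = u), term m ν with hedef
  have hKEY : ∀ u : ℝ, coeffF m (μ + u • a) = e u - e (u - 1) := by
    intro u
    rw [hfiber u, fiber_reindex_u hAfin ∅ (Finset.notMem_empty a) hleva a μ u (term m)]
    rw [hma]
    rw [Finset.sum_range_succ, Finset.sum_range_one]
    have h0 : ∀ ν ∈ A.filter (fun ν => (∀ s ∈ insert a (∅ : Finset (ℝ × V)), ν s = 0) ∧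
        ratio a (wsum ν - μ) = u - (0 : ℕ) * ratio a a),
        term m (ν + Finsupp.single a 0) = term m ν := by
      intro ν _
      rw [Finsupp.single_zero, add_zero]
    have h1 : ∀ ν ∈ A.filter (fun ν => (∀ s ∈ insert a (∅ : Finset (ℝ × V)), ν s = 0) ∧
        ratio a (wsum ν - μ) = u - (1 : ℕ) * ratio a a),
        term m (ν + Finsupp.single a 1) = -(term m ν) := by
      intro ν hν
      rw [Finset.mem_filter] at hν
      rw [term_add_single 1 (hν.2.1 a (Finset.mem_insert_self _ _)), hma]
      norm_num
    rw [Finset.sum_congr rfl h0, Finset.sum_congr rfl h1, Finset.sum_neg_distrib]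
    have hu0 : u - (0 : ℕ) * ratio a a = u := by push_cast; ring
    have hu1 : u - (1 : ℕ) * ratio a a = u - 1 := by rw [hra]; push_cast; ring
    rw [hu0, hu1, hedef]
    ring
  -- support of e
  have hesupfin : (support e).Finite := by
    apply Set.Finite.subset (A.image (fun ν => ratio a (wsum ν - μ))).finite_toSet
    intro u hu
    rw [mem_support] at hu
    obtain ⟨ν, hν, -⟩ := Finset.exists_ne_zero_of_sum_ne_zero hu
    rw [Finset.mem_filter] at hν
    rw [Finset.coe_image, Set.mem_image]
    exact ⟨ν, hν.1, hν.2.2⟩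
  have hesupne : (support e).Nonempty := by
    by_contra hc
    rw [Set.not_nonempty_iff_eq_empty, support_eq_empty_iff] at hc
    apply hμ
    have h1 := hKEY 0
    rw [zero_smul, add_zero] at h1
    rw [h1, hc]
    simp
  -- apply the telescope
  obtain ⟨u₀, d, hd, hiff⟩ := telescope e hesupfin hesupne
    (fun u => coeffF m (μ + u • a)) hKEY
    (fun u₁ u₂ u₃ h1 h2 h3 => quad_two hr ha2 μ (hP _ h1) (hP _ h2) (hP _ h3))
  have hzero_mem : (0 : ℝ) = u₀ ∨ (0 : ℝ) = u₀ + d := by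
    apply (hiff 0).1
    rw [zero_smul, add_zero]
    exact hμ
  have hq1 : coeffF m (μ + u₀ • a) ≠ 0 := (hiff u₀).2 (Or.inl rfl)
  have hq2 : coeffF m (μ + (u₀ + (d : ℝ)) • a) ≠ 0 := (hiff _).2 (Or.inr rfl)
  have E1 := hP _ hq1
  have E2 := hP _ hq2
  rw [para_expand] at E1 E2
  have hdR : ((d : ℝ)) ≠ 0 := by
    have : (0 : ℝ) < (d : ℝ) := by exact_mod_cast hd
    linarith
  have hkey2 : a.1 - 2 * r * ⟪(μ - c).2, a.2⟫ = (2 * u₀ + (d : ℝ)) * (r * ‖a.2‖ ^ 2) := by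
    apply mul_left_cancel₀ hdR
    linear_combination E2 - E1
  rcases hzero_mem with h | h
  · refine ⟨(d : ℤ), ?_⟩
    rw [hkey2, ← h]
    push_cast
    ring
  · refine ⟨-(d : ℤ), ?_⟩
    rw [hkey2]
    have hu₀ : u₀ = -(d : ℝ) := by linarith
    rw [hu₀]
    push_cast
    ring

end S19

theorem stmt19 {V : Type*} [NormedAddCommGroup V] [InnerProductSpace ℝ V]
    [FiniteDimensional ℝ V]
    (m : ℝ × V → ℕ) (h0 : m 0 = 0)
    (hne : (Function.support m).Nonempty)
    (hhalf : ∀ n : ℝ × V, 0 < n.1 → ∀ C : ℝ,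
      {s ∈ Function.support m | s.1 * n.1 + ⟪s.2, n.2⟫ ≤ C}.Finite)
    (hspan : Submodule.span ℝ (Function.support m) = ⊤)
    (hirr : ¬ ∃ S₁ S₂ : Set (ℝ × V),
      {s ∈ Function.support m | s.2 ≠ 0} = S₁ ∪ S₂ ∧ S₁.Nonempty ∧ S₂.Nonempty ∧
      Disjoint S₁ S₂ ∧ ∀ a ∈ S₁, ∀ b ∈ S₂, ⟪a.2, b.2⟫ = 0)
    (hpara : ∃ c : ℝ × V, ∃ r : ℝ, 0 < r ∧
      ∀ l : ℝ × V, coeffF m l ≠ 0 → (l - c).1 = r * ‖(l - c).2‖ ^ 2) :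
    ∀ a ∈ {s ∈ Function.support m | s.2 ≠ 0}, ∀ b ∈ {s ∈ Function.support m | s.2 ≠ 0},
      ∃ k : ℤ, 2 * ⟪a.2, b.2⟫ = (k : ℝ) * ‖a.2‖ ^ 2 := by
  classical
  intro a ha b hb
  obtain ⟨haS, ha2⟩ := ha
  obtain ⟨hbS, hb2⟩ := hb
  obtain ⟨c, r, hr, hP⟩ := hpara
  have hh : ∀ w : V, ∀ C : ℝ, {s ∈ Function.support m | S19.lev w s ≤ C}.Finite := by
    intro w C
    have h1 := hhalf (1, w) one_pos C
    convert h1 using 1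
    ext s
    simp only [Set.mem_setOf_eq, S19.lev, mul_one]
  have hAchC : (S19.Ach m).Countable := S19.Ach_countable (hh 0)
  have hgw : ∀ dir : ℝ × V, dir.2 ≠ 0 → ∃ w : V, S19.lev w dir = 0 ∧
      (∀ x ∈ S19.Ach m, ∀ y ∈ S19.Ach m,
        S19.lev w x = S19.lev w y → ∃ t : ℝ, x - y = t • dir) := by
    intro dir hdir
    obtain ⟨w, hw1, hw2⟩ := S19.exists_generic dir hdir
      (Set.image2 Sub.sub (S19.Ach m) (S19.Ach m)) (Set.Countable.image2 hAchC hAchC _)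
    refine ⟨w, hw1, ?_⟩
    intro x hx y hy hxy
    apply hw2 (x - y) (Set.mem_image2_of_mem hx hy)
    rw [S19.lev_sub, hxy, sub_self]
  obtain ⟨wb, hwb1, hwb2⟩ := hgw b hb2
  obtain ⟨-, lam, hlam1, hlam2⟩ := S19.bottom h0 hb2 hbS hwb1 (hh wb) hwb2 hr hP
  obtain ⟨wa, hwa1, hwa2⟩ := hgw a ha2
  obtain ⟨⟨-, hma⟩, -⟩ := S19.bottom h0 ha2 haS hwa1 (hh wa) hwa2 hr hP
  obtain ⟨z1, hz1⟩ := S19.tau_int ha2 hwa1 (hh wa) hwa2 hma hr hP hlam1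
  obtain ⟨z2, hz2⟩ := S19.tau_int ha2 hwa1 (hh wa) hwa2 hma hr hP hlam2
  refine ⟨z1 - z2, ?_⟩
  have hsub : ((lam + b) - c).2 = (lam - c).2 + b.2 := by
    simp only [Prod.snd_sub, Prod.snd_add]
    abel
  rw [hsub, inner_add_left] at hz2
  have hcomm : ⟪a.2, b.2⟫ = ⟪b.2, a.2⟫ := real_inner_comm _ _
  have hmain : 2 * r * ⟪b.2, a.2⟫ = ((z1 - z2 : ℤ) : ℝ) * (r * ‖a.2‖ ^ 2) := by
    push_cast
    linarith [hz1, hz2]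
  rw [hcomm]
  have hr' : r ≠ 0 := ne_of_gt hr
  apply mul_left_cancel₀ hr'
  push_cast at hmain ⊢
  linarith [hmain]
end
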